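/- arXiv:1408.2299 — 7 statements merged into one kernel-verified Lean document; each statement's English description precedes it below -/
import Mathlib

section
/- Let B = (b_{i1...im}) be a real tensor of order m ≥ 2 and dimension n ≥ 2. Then B is a B-tensor if and only if for each index i ∈ {1,...,n} one has b_{i...i} − β_i(B) > Δ_i(B). -/
open Finset

/-- The set of index tuples `(i, i₂, …, i_m)` in row `i` of an order-`m`, dimension-`n`
tensor, i.e. all tuples whose first index is `i`. -/
def rowSet (m n : ℕ) (i : Fin n) : Finset (Fin m → Fin n) :=
  Finset.univ.filter fun α => ∀ t : Fin m, (t : ℕ) = 0 → α t = i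

/-- The set of off-diagonal index tuples in row `i`: tuples whose first index is `i`
and whose indices are not all equal to `i` (i.e. `δ_{i i₂ … i_m} = 0`). -/
def offRowSet (m n : ℕ) (i : Fin n) : Finset (Fin m → Fin n) :=
  Finset.univ.filter fun α => (∀ t : Fin m, (t : ℕ) = 0 → α t = i) ∧ α ≠ fun _ => i

/-- The diagonal entry `b_{i…i}`. -/
def diagEntry {m n : ℕ} (B : (Fin m → Fin n) → ℝ) (i : Fin n) : ℝ :=
  B fun _ => i

/-- `β_i(B) = max {0, b_{i j₂ ⋯ j_m} : δ_{i j₂ … j_m} = 0}`. -/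
def betaMax {m n : ℕ} (B : (Fin m → Fin n) → ℝ) (i : Fin n) : ℝ :=
  (offRowSet m n i).fold max 0 B

/-- `Δ_i(B) = Σ_{δ_{i i₂…i_m} = 0} (β_i(B) - b_{i i₂ ⋯ i_m})`. -/
def DeltaSum {m n : ℕ} (B : (Fin m → Fin n) → ℝ) (i : Fin n) : ℝ :=
  ∑ α ∈ offRowSet m n i, (betaMax B i - B α)

/-- `r_i(B) = Σ_{δ_{i i₂…i_m} = 0} |b_{i i₂ ⋯ i_m}|`. -/
def rowAbsSum {m n : ℕ} (B : (Fin m → Fin n) → ℝ) (i : Fin n) : ℝ :=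
  ∑ α ∈ offRowSet m n i, |B α|

/-- The index tuple `(j, i, i, …, i)`. -/
def spike (m n : ℕ) (j i : Fin n) : Fin m → Fin n :=
  fun t => if (t : ℕ) = 0 then j else i

/-- `Δ_j^i(B) = Δ_j(B) - (β_j(B) - b_{j i⋯i})`. -/
def DeltaSubSum {m n : ℕ} (B : (Fin m → Fin n) → ℝ) (j i : Fin n) : ℝ :=
  DeltaSum B j - (betaMax B j - B (spike m n j i))

/-- `r_j^i(B) = r_j(B) - |b_{j i⋯i}|`. -/
def rowAbsSubSum {m n : ℕ} (B : (Fin m → Fin n) → ℝ) (j i : Fin n) : ℝ :=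
  rowAbsSum B j - |B (spike m n j i)|

/-- `B` is a B-tensor: each row sum is positive and `(1/n^{m-1})` times the row sum
strictly dominates every off-diagonal entry of that row. -/
def IsBTensor {m n : ℕ} (B : (Fin m → Fin n) → ℝ) : Prop :=
  ∀ i : Fin n,
    0 < ∑ α ∈ rowSet m n i, B α ∧
    ∀ α ∈ offRowSet m n i,
      B α < (1 / (n : ℝ) ^ (m - 1)) * ∑ α' ∈ rowSet m n i, B α'

/-- `B` is a double B-tensor. -/
def IsDoubleBTensor {m n : ℕ} (B : (Fin m → Fin n) → ℝ) : Prop :=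
  (∀ i, betaMax B i < diagEntry B i) ∧
  (∀ i, DeltaSum B i ≤ diagEntry B i - betaMax B i) ∧
  (∀ i j, i ≠ j →
    DeltaSum B i * DeltaSum B j <
      (diagEntry B i - betaMax B i) * (diagEntry B j - betaMax B j))

/-- `B` is a quasi-double B-tensor. -/
def IsQuasiDoubleBTensor {m n : ℕ} (B : (Fin m → Fin n) → ℝ) : Prop :=
  (∀ i, betaMax B i < diagEntry B i) ∧
  ∀ i j, i ≠ j →
    (betaMax B j - B (spike m n j i)) * DeltaSum B i <
      (diagEntry B i - betaMax B i) *
        (diagEntry B j - betaMax B j - DeltaSubSum B j i)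

/-- `B` is a Z-tensor: all off-diagonal entries are non-positive. -/
def IsZTensor {m n : ℕ} (B : (Fin m → Fin n) → ℝ) : Prop :=
  ∀ α : Fin m → Fin n, (∃ s t, α s ≠ α t) → B α ≤ 0

/-- `B` is a symmetric tensor: invariant under permutations of the indices. -/
def IsSymmetricTensor {m n : ℕ} (B : (Fin m → Fin n) → ℝ) : Prop :=
  ∀ (σ : Equiv.Perm (Fin m)) (α : Fin m → Fin n), B (α ∘ σ) = B α

/-- `B` is doubly strictly diagonally dominant (for order `m > 2`). -/
def IsDSDD {m n : ℕ} (B : (Fin m → Fin n) → ℝ) : Prop :=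
  (∀ i, rowAbsSum B i ≤ |diagEntry B i|) ∧
  (∀ i j, i ≠ j → rowAbsSum B i * rowAbsSum B j < |diagEntry B i| * |diagEntry B j|)

/-- `B` is quasi-doubly strictly diagonally dominant. -/
def IsQDSDD {m n : ℕ} (B : (Fin m → Fin n) → ℝ) : Prop :=
  ∀ i j, i ≠ j →
    rowAbsSum B i * |B (spike m n j i)| <
      |diagEntry B i| * (|diagEntry B j| - rowAbsSubSum B j i)

/-- `B x^m = Σ b_{i₁⋯i_m} x_{i₁} ⋯ x_{i_m}`. -/
def tensorApply {m n : ℕ} (B : (Fin m → Fin n) → ℝ) (x : Fin n → ℝ) : ℝ :=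
  ∑ α : Fin m → Fin n, B α * ∏ t, x (α t)

/-- `B` is positive definite: `B x^m > 0` for every nonzero `x ∈ ℝ^n`. -/
def IsPosDefTensor {m n : ℕ} (B : (Fin m → Fin n) → ℝ) : Prop :=
  ∀ x : Fin n → ℝ, x ≠ 0 → 0 < tensorApply B x

/-- `(B x^{m-1})_i = Σ_{i₂,…,i_m} b_{i i₂ ⋯ i_m} x_{i₂} ⋯ x_{i_m}`. -/
def rowApply {m n : ℕ} (B : (Fin m → Fin n) → ℝ) (x : Fin n → ℝ) (i : Fin n) : ℝ :=
  ∑ α ∈ rowSet m n i, B α * ∏ t ∈ Finset.univ.filter (fun t : Fin m => (t : ℕ) ≠ 0), x (α t)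

/-- `B` is a P-tensor: for every nonzero `x`, `max_i x_i (B x^{m-1})_i > 0`. -/
def IsPTensor {m n : ℕ} (B : (Fin m → Fin n) → ℝ) : Prop :=
  ∀ x : Fin n → ℝ, x ≠ 0 → ∃ i, 0 < x i * rowApply B x i

/-- `lam` is an H-eigenvalue of `B`. -/
def IsHEigenvalue {m n : ℕ} (B : (Fin m → Fin n) → ℝ) (lam : ℝ) : Prop :=
  ∃ x : Fin n → ℝ, x ≠ 0 ∧ ∀ i, rowApply B x i = lam * x i ^ (m - 1)

/-- The partially all one tensor `ε^J`: entry `1` if all indices lie in `J`, else `0`. -/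
def epsTensor (m n : ℕ) (J : Finset (Fin n)) : (Fin m → Fin n) → ℝ :=
  fun α => if ∀ t, α t ∈ J then 1 else 0

lemma rowSet_eq (k n : ℕ) (i : Fin n) :
    rowSet (k+1) n i = Finset.image (fun f : Fin k → Fin n => Fin.cons i f) Finset.univ := by
  ext α
  simp only [rowSet, Finset.mem_filter, Finset.mem_univ, true_and, Finset.mem_image]
  constructor
  · intro h
    refine ⟨fun j => α j.succ, ?_⟩
    funext t
    refine Fin.cases ?_ ?_ t
    · simpa using (h 0 rfl).symm
    · intro j; simp
  · rintro ⟨f, rfl⟩ t ht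
    have : t = 0 := Fin.ext ht
    subst this; simp

lemma card_rowSet (k n : ℕ) (i : Fin n) : (rowSet (k+1) n i).card = n ^ k := by
  have hinj : Function.Injective (fun f : Fin k → Fin n => Fin.cons (α := fun _ => Fin n) i f) :=
    fun f g h => funext fun j => by simpa using congr_fun h j.succ
  rw [rowSet_eq, Finset.card_image_of_injective _ hinj, Finset.card_univ]
  simp

lemma offRowSet_eq (m n : ℕ) (i : Fin n) :
    offRowSet m n i = (rowSet m n i).erase (fun _ => i) := by
  ext α
  simp only [offRowSet, rowSet, Finset.mem_filter, Finset.mem_univ, true_and,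
    Finset.mem_erase]
  tauto

/-- `B` is a B-tensor iff for each `i`, `b_{i…i} - β_i(B) > Δ_i(B)`. -/
theorem stmt0 (m n : ℕ) (hm : 2 ≤ m) (hn : 2 ≤ n) (B : (Fin m → Fin n) → ℝ) :
    IsBTensor B ↔ ∀ i : Fin n, DeltaSum B i < diagEntry B i - betaMax B i := by
  obtain ⟨k, rfl⟩ : ∃ k, m = k + 1 := ⟨m - 1, (Nat.succ_pred_eq_of_pos (by omega)).symm⟩
  unfold IsBTensor
  refine forall_congr' fun i => ?_
  set S := ∑ α ∈ rowSet (k+1) n i, B α with hS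
  have hconst : (fun _ => i) ∈ rowSet (k+1) n i := by simp [rowSet]
  have hsplit : S = B (fun _ => i) + ∑ α ∈ offRowSet (k+1) n i, B α := by
    rw [offRowSet_eq, hS, ← Finset.add_sum_erase _ _ hconst]
  have h1 : 1 ≤ n ^ k := Nat.one_le_pow _ _ (by omega)
  have hcard : ((offRowSet (k+1) n i).card : ℝ) = (n:ℝ)^k - 1 := by
    rw [offRowSet_eq, Finset.card_erase_of_mem hconst, card_rowSet, Nat.cast_sub h1]
    push_cast; ring
  have hΔ : DeltaSum B i = ((n:ℝ)^k - 1) * betaMax B i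
      - ∑ α ∈ offRowSet (k+1) n i, B α := by
    unfold DeltaSum
    rw [Finset.sum_sub_distrib, Finset.sum_const, nsmul_eq_mul, hcard]
  have hβ : ∀ c : ℝ, betaMax B i < c ↔
      0 < c ∧ ∀ α ∈ offRowSet (k+1) n i, B α < c := fun c => by
    rw [betaMax]; exact Finset.fold_max_lt c
  have hp : (0:ℝ) < (n:ℝ)^k := by positivity
  have hc : (1 : ℝ) / (n:ℝ) ^ (k + 1 - 1) = 1 / (n:ℝ)^k := by norm_num
  have h2 : (n:ℝ)^k * (1/(n:ℝ)^k * S) = S := by field_simp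
  constructor
  · rintro ⟨hpos, hdom⟩
    have hβlt : betaMax B i < 1/(n:ℝ)^k * S := by
      refine (hβ _).2 ⟨by positivity, fun α hα => ?_⟩
      simpa [hc] using hdom α hα
    have hmul : (n:ℝ)^k * betaMax B i < S := by
      have := mul_lt_mul_of_pos_left hβlt hp
      rwa [h2] at this
    rw [hΔ]
    unfold diagEntry
    linarith [hsplit]
  · intro h
    have hmul : (n:ℝ)^k * betaMax B i < S := by
      rw [hΔ] at h
      unfold diagEntry at h
      linarith [hsplit]
    have hβlt : betaMax B i < 1/(n:ℝ)^k * S := by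
      rw [one_div, inv_mul_eq_div, lt_div_iff₀ hp, mul_comm]
      exact hmul
    obtain ⟨hcpos, hdom⟩ := (hβ _).1 hβlt
    have hSpos : 0 < S := by
      have := mul_pos hp hcpos
      rwa [h2] at this
    exact ⟨hSpos, fun α hα => by rw [hc]; exact hdom α hα⟩
end

section
/- Let B = (b_{i1...im}) be a real tensor of order m ≥ 2 and dimension n ≥ 2. If B is a quasi-double B-tensor, then there is at most one index i ∈ {1,...,n} such that b_{i...i} − β_i(B) ≤ Δ_i(B). -/
open Finset

/-- a quasi-double B-tensor has at most one index `i` with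
`b_{i…i} - β_i(B) ≤ Δ_i(B)`. -/
theorem stmt2 (m n : ℕ) (hm : 2 ≤ m) (hn : 2 ≤ n) (B : (Fin m → Fin n) → ℝ)
    (hB : IsQuasiDoubleBTensor B) :
    ∀ i j : Fin n, diagEntry B i - betaMax B i ≤ DeltaSum B i →
      diagEntry B j - betaMax B j ≤ DeltaSum B j → i = j := by
  intro i j hi hj
  by_contra hij
  have ha := hB.1 i
  have hq := hB.2 i j hij
  have hmem : spike m n j i ∈ offRowSet m n j := by
    simp only [offRowSet, Finset.mem_filter, Finset.mem_univ, true_and]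
    refine ⟨fun t ht => by simp [spike, ht], fun h => ?_⟩
    have h1 := congrFun h ⟨1, lt_of_lt_of_le one_lt_two hm⟩
    simp [spike] at h1
    exact hij h1
  have hs : B (spike m n j i) ≤ betaMax B j := by
    unfold betaMax
    exact (Finset.le_fold_max _).mpr (Or.inr ⟨_, hmem, le_refl _⟩)
  unfold DeltaSubSum at hq
  nlinarith [mul_le_mul_of_nonneg_right hi (by linarith : (0:ℝ) ≤ betaMax B j - B (spike m n j i)),
    mul_le_mul_of_nonneg_left hj (by linarith : (0:ℝ) ≤ diagEntry B i - betaMax B i)]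
end

section
/- Let B = (b_{i1...im}) be a Z-tensor of order m ≥ 2 and dimension n ≥ 2 whose diagonal entries are all positive (b_{i...i} > 0 for all i). Then B is a quasi-double B-tensor if and only if B is a quasi-doubly strictly diagonally dominant (Q-DSDD) tensor. -/
open Finset

/-- a Z-tensor of order `m ≥ 2` with positive diagonal entries is a
quasi-double B-tensor iff it is a Q-DSDD tensor. -/
theorem stmt7 (m n : ℕ) (hm : 2 ≤ m) (hn : 2 ≤ n) (B : (Fin m → Fin n) → ℝ)
    (hZ : IsZTensor B) (hdiag : ∀ i : Fin n, 0 < diagEntry B i) :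
    IsQuasiDoubleBTensor B ↔ IsQDSDD B := by
  have hZα : ∀ i : Fin n, ∀ α ∈ offRowSet m n i, B α ≤ 0 := by
    intro i α hα
    simp only [offRowSet, Finset.mem_filter] at hα
    obtain ⟨-, h1, h2⟩ := hα
    apply hZ
    have hne : ∃ t, α t ≠ i := by
      by_contra h; push_neg at h; exact h2 (funext h)
    obtain ⟨t, ht⟩ := hne
    exact ⟨t, ⟨0, by omega⟩, by rw [h1 ⟨0, by omega⟩ rfl]; exact ht⟩
  have hβ : ∀ i, betaMax B i = 0 := by
    intro i
    apply le_antisymm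
    · exact (Finset.fold_max_le 0).mpr ⟨le_rfl, fun α hα => hZα i α hα⟩
    · exact (Finset.le_fold_max 0).mpr (Or.inl le_rfl)
  have hΔ : ∀ i, DeltaSum B i = rowAbsSum B i := by
    intro i
    apply Finset.sum_congr rfl
    intro α hα
    rw [hβ, abs_of_nonpos (hZα i α hα)]
    ring
  have hspike : ∀ i j : Fin n, i ≠ j → B (spike m n j i) ≤ 0 := by
    intro i j hij
    apply hZ
    refine ⟨⟨0, by omega⟩, ⟨1, by omega⟩, ?_⟩
    simp only [spike]
    norm_num
    exact fun h => hij h.symm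
  constructor
  · rintro ⟨-, h2⟩ i j hij
    have h := h2 i j hij
    rw [hβ, hβ, hΔ] at h
    unfold DeltaSubSum at h
    rw [hβ, hΔ] at h
    unfold rowAbsSubSum
    rw [abs_of_pos (hdiag i), abs_of_pos (hdiag j), abs_of_nonpos (hspike i j hij)]
    nlinarith [h]
  · intro h
    refine ⟨fun i => by rw [hβ]; exact hdiag i, fun i j hij => ?_⟩
    have hq := h i j hij
    unfold rowAbsSubSum at hq
    rw [abs_of_pos (hdiag i), abs_of_pos (hdiag j), abs_of_nonpos (hspike i j hij)] at hq
    rw [hβ, hβ, hΔ]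
    unfold DeltaSubSum
    rw [hβ, hΔ]
    nlinarith [hq]
end

section
/- Let A = (a_{i1...im}) be a real symmetric tensor of even order m and dimension n > 2 with all diagonal entries positive (a_{k...k} > 0 for all k). If A is a doubly strictly diagonally dominant (DSDD) tensor, then A is positive definite. -/
open Finset

section Aux

lemma amgm {m : ℕ} (hm : 0 < m) (y : Fin m → ℝ) (hy : ∀ t, 0 ≤ y t) :
    ∏ t, y t ≤ (m : ℝ)⁻¹ * ∑ t, y t ^ m := by
  have hm' : (m : ℝ) ≠ 0 := Nat.cast_ne_zero.mpr hm.ne'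
  have h := Real.geom_mean_le_arith_mean_weighted Finset.univ
    (fun _ => (m : ℝ)⁻¹) (fun t => y t ^ m)
    (fun _ _ => inv_nonneg.mpr (Nat.cast_nonneg m))
    (by simp [Finset.sum_const, mul_comm]; field_simp)
    (fun t _ => pow_nonneg (hy t) m)
  calc ∏ t, y t = ∏ t, (y t ^ m) ^ ((m : ℝ)⁻¹ : ℝ) := by
        refine Finset.prod_congr rfl fun t _ => ?_
        rw [← Real.rpow_natCast (y t) m, ← Real.rpow_mul (hy t),
          mul_inv_cancel₀ hm', Real.rpow_one]
    _ ≤ ∑ t, (m : ℝ)⁻¹ * y t ^ m := h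
    _ = (m : ℝ)⁻¹ * ∑ t, y t ^ m := by rw [Finset.mul_sum]

lemma mem_offRowSet_iff {m n : ℕ} (hm : 0 < m) (i : Fin n) (α : Fin m → Fin n) :
    α ∈ offRowSet m n i ↔ α ⟨0, hm⟩ = i ∧ α ≠ fun _ => i := by
  simp only [offRowSet, Finset.mem_filter, Finset.mem_univ, true_and]
  constructor
  · rintro ⟨h1, h2⟩
    exact ⟨h1 ⟨0, hm⟩ rfl, h2⟩
  · rintro ⟨h1, h2⟩
    refine ⟨fun t ht => ?_, h2⟩
    have htt : t = ⟨0, hm⟩ := Fin.ext ht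
    rw [htt]
    exact h1

end Aux

/-- an even order symmetric DSDD tensor of dimension `n > 2` with
positive diagonal entries is positive definite. -/
theorem stmt8 (m n : ℕ) (hm : 0 < m) (hme : Even m) (hn : 2 < n)
    (A : (Fin m → Fin n) → ℝ) (hsym : IsSymmetricTensor A)
    (hdiag : ∀ k : Fin n, 0 < diagEntry A k) (hA : IsDSDD A) :
    IsPosDefTensor A := by
  intro x hx
  set t0 : Fin m := ⟨0, hm⟩ with ht0
  set y : Fin n → ℝ := fun k => |x k| with hydef
  have hy0 : ∀ k, 0 ≤ y k := fun k => abs_nonneg _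
  set D : Finset (Fin m → Fin n) :=
    Finset.univ.filter (fun α => ∃ s t, α s ≠ α t) with hD
  -- fibers of D are the off-row sets
  have hfiber : ∀ i : Fin n, D.filter (fun α => α t0 = i) = offRowSet m n i := by
    intro i
    ext α
    simp only [hD, Finset.mem_filter, Finset.mem_univ, true_and,
      mem_offRowSet_iff hm, ← ht0]
    constructor
    · rintro ⟨⟨s, t, hst⟩, h0⟩
      refine ⟨h0, fun hc => hst ?_⟩
      simp [hc]
    · rintro ⟨h0, hne⟩
      refine ⟨?_, h0⟩
      by_contra hcon
      push_neg at hcon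
      exact hne (funext fun t => by rw [hcon t t0, h0])
  -- value at a single-support vector
  have hsingle : ∀ k0 : Fin n, (∀ k, k ≠ k0 → x k = 0) →
      tensorApply A x = A (fun _ => k0) * x k0 ^ m := by
    intro k0 hk0
    rw [tensorApply, Finset.sum_eq_single (fun _ => k0)]
    · simp [Finset.prod_const]
    · intro α _ hα
      have hex : ∃ t, α t ≠ k0 := by
        by_contra h
        push_neg at h
        exact hα (funext h)
      obtain ⟨t, ht⟩ := hex
      rw [Finset.prod_eq_zero (Finset.mem_univ t) (hk0 _ ht), mul_zero]
    · intro h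
      exact absurd (Finset.mem_univ _) h
  -- decomposition into diagonal and off-diagonal parts
  have hsplit : tensorApply A x
      = (∑ k, A (fun _ => k) * x k ^ m) + ∑ α ∈ D, A α * ∏ t, x (α t) := by
    rw [tensorApply,
      ← Finset.sum_filter_add_sum_filter_not Finset.univ
        (fun α : Fin m → Fin n => ∃ s t, α s ≠ α t)
        (fun α => A α * ∏ t, x (α t)), add_comm]
    congr 1
    have himg : Finset.univ.filter (fun α : Fin m → Fin n => ¬ ∃ s t, α s ≠ α t)
        = Finset.image (fun k : Fin n => (fun _ => k : Fin m → Fin n)) Finset.univ := by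
      ext α
      simp only [Finset.mem_filter, Finset.mem_univ, true_and, Finset.mem_image]
      constructor
      · intro h
        push_neg at h
        exact ⟨α t0, funext fun t => h t0 t⟩
      · rintro ⟨k, rfl⟩
        push_neg
        intro s t
        rfl
    rw [himg, Finset.sum_image (fun k _ k' _ h => congrFun h t0)]
    refine Finset.sum_congr rfl fun k _ => ?_
    simp [Finset.prod_const]
  -- swapping index positions preserves the row sums
  have hswap : ∀ t : Fin m,
      ∑ α ∈ D, |A α| * y (α t) ^ m = ∑ α ∈ D, |A α| * y (α t0) ^ m := by
    intro t
    refine Finset.sum_nbij' (fun α => α ∘ Equiv.swap t0 t)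
      (fun α => α ∘ Equiv.swap t0 t) ?_ ?_ ?_ ?_ ?_
    · intro α hα
      simp only [hD, Finset.mem_filter, Finset.mem_univ, true_and] at hα ⊢
      obtain ⟨s, u, hsu⟩ := hα
      exact ⟨Equiv.swap t0 t s, Equiv.swap t0 t u, by
        simpa [Equiv.swap_apply_self] using hsu⟩
    · intro α hα
      simp only [hD, Finset.mem_filter, Finset.mem_univ, true_and] at hα ⊢
      obtain ⟨s, u, hsu⟩ := hα
      exact ⟨Equiv.swap t0 t s, Equiv.swap t0 t u, by
        simpa [Equiv.swap_apply_self] using hsu⟩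
    · intro α _
      funext s
      simp [Function.comp, Equiv.swap_apply_self]
    · intro α _
      funext s
      simp [Function.comp, Equiv.swap_apply_self]
    · intro α _
      have h1 : A (α ∘ Equiv.swap t0 t) = A α := hsym (Equiv.swap t0 t) α
      have h2 : (α ∘ Equiv.swap t0 t) t0 = α t := by
        simp [Function.comp, Equiv.swap_apply_left]
      show |A α| * y (α t) ^ m = |A (α ∘ Equiv.swap t0 t)| * y ((α ∘ Equiv.swap t0 t) t0) ^ m
      rw [h1, h2]
  -- AM-GM + symmetry bound
  have hsum1 : ∑ α ∈ D, |A α| * ∏ t, y (α t) ≤ ∑ α ∈ D, |A α| * y (α t0) ^ m := by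
    have hm' : (m : ℝ) ≠ 0 := Nat.cast_ne_zero.mpr hm.ne'
    calc ∑ α ∈ D, |A α| * ∏ t, y (α t)
        ≤ ∑ α ∈ D, |A α| * ((m : ℝ)⁻¹ * ∑ t, y (α t) ^ m) :=
          Finset.sum_le_sum fun α _ =>
            mul_le_mul_of_nonneg_left (amgm hm _ (fun t => hy0 _)) (abs_nonneg _)
      _ = (m : ℝ)⁻¹ * ∑ t : Fin m, ∑ α ∈ D, |A α| * y (α t) ^ m := by
          rw [Finset.mul_sum]
          rw [show (∑ α ∈ D, |A α| * ((m : ℝ)⁻¹ * ∑ t, y (α t) ^ m))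
              = ∑ α ∈ D, ∑ t : Fin m, (m : ℝ)⁻¹ * (|A α| * y (α t) ^ m) from
            Finset.sum_congr rfl fun α _ => by
              rw [Finset.mul_sum, Finset.mul_sum]
              exact Finset.sum_congr rfl fun t _ => by ring]
          rw [Finset.sum_comm]
          exact Finset.sum_congr rfl fun t _ => by rw [Finset.mul_sum]
      _ = (m : ℝ)⁻¹ * ∑ t : Fin m, ∑ α ∈ D, |A α| * y (α t0) ^ m := by
          rw [Finset.sum_congr rfl fun t _ => hswap t]
      _ = ∑ α ∈ D, |A α| * y (α t0) ^ m := by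
          rw [Finset.sum_const, Finset.card_univ, Fintype.card_fin, nsmul_eq_mul,
            ← mul_assoc, inv_mul_cancel₀ hm', one_mul]
  -- regrouping by first index
  have hsum2 : ∑ α ∈ D, |A α| * y (α t0) ^ m = ∑ k, rowAbsSum A k * y k ^ m := by
    rw [← Finset.sum_fiberwise D (fun α => α t0) (fun α => |A α| * y (α t0) ^ m)]
    refine Finset.sum_congr rfl fun k _ => ?_
    rw [hfiber k, rowAbsSum, Finset.sum_mul]
    refine Finset.sum_congr rfl fun α hα => ?_
    rw [((mem_offRowSet_iff hm k α).mp hα).1]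
  -- the main lower bound
  have hA1 : ∀ k, rowAbsSum A k ≤ diagEntry A k := by
    intro k
    have := hA.1 k
    rwa [abs_of_pos (hdiag k)] at this
  have hmain : ∑ k, (diagEntry A k - rowAbsSum A k) * y k ^ m ≤ tensorApply A x := by
    rw [hsplit]
    have hdd : ∀ k : Fin n, A (fun _ => k) * x k ^ m = diagEntry A k * y k ^ m := by
      intro k
      rw [diagEntry, hydef]
      rw [hme.pow_abs]
    have hoff : -(∑ k, rowAbsSum A k * y k ^ m) ≤ ∑ α ∈ D, A α * ∏ t, x (α t) := by
      have hb : ∑ α ∈ D, -(|A α| * ∏ t, y (α t)) ≤ ∑ α ∈ D, A α * ∏ t, x (α t) := by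
        refine Finset.sum_le_sum fun α _ => ?_
        have habs : |A α * ∏ t, x (α t)| = |A α| * ∏ t, y (α t) := by
          rw [abs_mul, Finset.abs_prod]
        calc -(|A α| * ∏ t, y (α t)) = -|A α * ∏ t, x (α t)| := by rw [habs]
          _ ≤ A α * ∏ t, x (α t) := neg_abs_le _
      rw [Finset.sum_neg_distrib] at hb
      have := hsum1.trans (le_of_eq hsum2)
      linarith
    have hsum3 : ∑ k, (diagEntry A k - rowAbsSum A k) * y k ^ m
        = (∑ k, diagEntry A k * y k ^ m) - ∑ k, rowAbsSum A k * y k ^ m := by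
      rw [← Finset.sum_sub_distrib]
      exact Finset.sum_congr rfl fun k _ => by ring
    rw [hsum3, Finset.sum_congr rfl fun k _ => hdd k]
    linarith
  by_cases hcase : ∃ k, x k ≠ 0 ∧ rowAbsSum A k < diagEntry A k
  · obtain ⟨k, hxk, hk⟩ := hcase
    refine lt_of_lt_of_le ?_ hmain
    refine Finset.sum_pos' (fun l _ => mul_nonneg (by have := hA1 l; linarith)
      (pow_nonneg (hy0 l) m)) ⟨k, Finset.mem_univ k, ?_⟩
    exact mul_pos (by linarith) (pow_pos (abs_pos.mpr hxk) m)
  · push_neg at hcase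
    have heq : ∀ k, x k ≠ 0 → rowAbsSum A k = diagEntry A k := fun k hk =>
      le_antisymm (hA1 k) (hcase k hk)
    obtain ⟨k0, hk0⟩ : ∃ k0, x k0 ≠ 0 := by
      by_contra h
      push_neg at h
      exact hx (funext fun k => h k)
    have hsupp : ∀ k, k ≠ k0 → x k = 0 := by
      intro k hkne
      by_contra hk
      have h2 := hA.2 k k0 hkne
      rw [abs_of_pos (hdiag k), abs_of_pos (hdiag k0), heq k hk, heq k0 hk0] at h2
      exact lt_irrefl _ h2
    rw [hsingle k0 hsupp]
    exact mul_pos (hdiag k0) (hme.pow_pos hk0)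
end

section
/- Let A = (a_{i1...im}) be a real symmetric tensor of even order m > 2 and dimension n > 2 with all diagonal entries positive (a_{k...k} > 0 for all k). If A is a quasi-doubly strictly diagonally dominant (Q-DSDD) tensor, then A is positive definite. -/
open Finset

namespace Stmt9Aux
open Finset

variable {m n : ℕ}

lemma filterT_eq (hm : 0 < m) :
    (univ.filter fun t : Fin m => (t : ℕ) ≠ 0) = univ.erase ⟨0, hm⟩ := by
  ext t; simp [Fin.ext_iff]

lemma card_filterT (hm : 0 < m) :
    (univ.filter fun t : Fin m => (t : ℕ) ≠ 0).card = m - 1 := by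
  rw [filterT_eq hm, card_erase_of_mem (mem_univ _), card_univ, Fintype.card_fin]

lemma mem_rowSet_iff (hm : 0 < m) (i : Fin n) (α : Fin m → Fin n) :
    α ∈ rowSet m n i ↔ α ⟨0, hm⟩ = i := by
  simp only [rowSet, mem_filter, mem_univ, true_and]
  constructor
  · intro h; exact h _ rfl
  · rintro h t ht; have ht' : t = ⟨0, hm⟩ := Fin.ext ht; rwa [ht']

lemma rowSet_eq (hm : 0 < m) (i : Fin n) :
    rowSet m n i = univ.filter fun α => α ⟨0, hm⟩ = i := by
  ext α; simp [mem_rowSet_iff hm]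

lemma offRowSet_eq (hm : 0 < m) (i : Fin n) :
    offRowSet m n i = (rowSet m n i).erase (fun _ => i) := by
  ext α
  simp only [offRowSet, rowSet, mem_filter, mem_erase, mem_univ, true_and]
  tauto

lemma rowApply_decomp (hm : 0 < m) (B : (Fin m → Fin n) → ℝ) (x : Fin n → ℝ) (i : Fin n) :
    rowApply B x i = diagEntry B i * x i ^ (m - 1)
      + ∑ α ∈ offRowSet m n i, B α * ∏ t ∈ univ.filter (fun t : Fin m => (t : ℕ) ≠ 0), x (α t) := by
  have hconst : (fun _ => i) ∈ rowSet m n i := by simp [mem_rowSet_iff hm]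
  rw [rowApply, ← Finset.add_sum_erase _ _ hconst, ← offRowSet_eq hm]
  congr 1
  rw [diagEntry]
  congr 1
  rw [Finset.prod_const, card_filterT hm]

lemma tensorApply_eq_sum (hm : 0 < m) (B : (Fin m → Fin n) → ℝ) (x : Fin n → ℝ) :
    tensorApply B x = ∑ i, x i * rowApply B x i := by
  have h0 : ∀ α : Fin m → Fin n,
      (∏ t, x (α t)) = x (α ⟨0, hm⟩) *
        ∏ t ∈ univ.filter (fun t : Fin m => (t : ℕ) ≠ 0), x (α t) := by
    intro α
    rw [filterT_eq hm]
    exact (Finset.mul_prod_erase univ (fun t => x (α t)) (mem_univ _)).symm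
  calc tensorApply B x
      = ∑ α : Fin m → Fin n, B α * (x (α ⟨0, hm⟩) *
          ∏ t ∈ univ.filter (fun t : Fin m => (t : ℕ) ≠ 0), x (α t)) := by
        unfold tensorApply
        exact Finset.sum_congr rfl fun α _ => by rw [h0]
    _ = ∑ i, ∑ α ∈ univ.filter (fun α : Fin m → Fin n => α ⟨0, hm⟩ = i),
          B α * (x (α ⟨0, hm⟩) *
          ∏ t ∈ univ.filter (fun t : Fin m => (t : ℕ) ≠ 0), x (α t)) :=
        (Finset.sum_fiberwise_of_maps_to (fun α _ => mem_univ _) _).symm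
    _ = ∑ i, x i * rowApply B x i := by
        refine Finset.sum_congr rfl fun i _ => ?_
        rw [rowApply, rowSet_eq hm, Finset.mul_sum]
        refine Finset.sum_congr rfl fun α hα => ?_
        rw [mem_filter] at hα
        rw [hα.2]; ring

lemma tensorApply_smul (B : (Fin m → Fin n) → ℝ) (c : ℝ) (x : Fin n → ℝ) :
    tensorApply B (c • x) = c ^ m * tensorApply B x := by
  unfold tensorApply
  rw [Finset.mul_sum]
  refine Finset.sum_congr rfl fun α _ => ?_
  have h : (∏ t, (c • x) (α t)) = c ^ m * ∏ t, x (α t) := by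
    simp only [Pi.smul_apply, smul_eq_mul]
    rw [Finset.prod_mul_distrib, Finset.prod_const, card_univ, Fintype.card_fin]
  rw [h]; ring

end Stmt9Aux
namespace Stmt9Aux
open Finset

variable {m n : ℕ}

noncomputable def tGrad (B : (Fin m → Fin n) → ℝ) (x : Fin n → ℝ) : (Fin n → ℝ) →L[ℝ] ℝ :=
  ∑ α : Fin m → Fin n, B α • ∑ t : Fin m,
    (∏ s ∈ univ.erase t, x (α s)) • (ContinuousLinearMap.proj (α t) : (Fin n → ℝ) →L[ℝ] ℝ)

lemma hasStrictFDerivAt_tensorApply (B : (Fin m → Fin n) → ℝ) (x : Fin n → ℝ) :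
    HasStrictFDerivAt (tensorApply B) (tGrad B x) x := by
  unfold tensorApply tGrad
  refine HasStrictFDerivAt.fun_sum fun α _ => ?_
  have h : ∀ t ∈ (univ : Finset (Fin m)), HasStrictFDerivAt (𝕜 := ℝ)
      (fun y : Fin n → ℝ => y (α t)) (ContinuousLinearMap.proj (α t)) x :=
    fun t _ => hasStrictFDerivAt_apply (𝕜 := ℝ) (α t) x
  exact (HasStrictFDerivAt.finset_prod h).const_mul (B α)

/-- Permuting the function argument by precomposition with a permutation. -/
def permEquiv (σ : Equiv.Perm (Fin m)) : (Fin m → Fin n) ≃ (Fin m → Fin n) where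
  toFun α := fun s => α (σ s)
  invFun α := fun s => α (σ.symm s)
  left_inv α := by ext s; simp
  right_inv α := by ext s; simp

lemma row_sum_eq (hm : 0 < m) (B : (Fin m → Fin n) → ℝ) (hsym : IsSymmetricTensor B)
    (x : Fin n → ℝ) (i : Fin n) (t : Fin m) :
    ∑ α : Fin m → Fin n, (if α t = i then B α * ∏ s ∈ univ.erase t, x (α s) else 0)
      = rowApply B x i := by
  have hrw : rowApply B x i = ∑ α : Fin m → Fin n,
      (if α ⟨0, hm⟩ = i then B α * ∏ s ∈ univ.erase ⟨0, hm⟩, x (α s) else 0) := by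
    rw [rowApply, rowSet_eq hm, Finset.sum_filter, filterT_eq hm]
  rw [hrw]
  set z : Fin m := ⟨0, hm⟩ with hz
  set σ : Equiv.Perm (Fin m) := Equiv.swap z t with hσ
  refine (Fintype.sum_equiv (permEquiv σ) _ _ fun α => ?_).symm
  show (if α z = i then B α * ∏ s ∈ univ.erase z, x (α s) else 0)
     = (if α (σ t) = i then B (fun s => α (σ s)) * ∏ s ∈ univ.erase t, x (α (σ s)) else 0)
  have hσt : σ t = z := Equiv.swap_apply_right z t
  have hB : B (fun s => α (σ s)) = B α := hsym σ α
  have himg : (univ.erase t).image σ = univ.erase z := by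
    rw [Finset.image_erase σ.injective, image_univ_equiv]
    simp [hσ, Equiv.swap_apply_right]
  have hpi := Finset.prod_image (s := univ.erase t) (g := ⇑σ) (f := fun b => x (α b))
    (fun a _ b _ h => σ.injective h)
  have hprod : ∏ s ∈ univ.erase t, x (α (σ s)) = ∏ s ∈ univ.erase z, x (α s) := by
    rw [← hpi, himg]
  rw [hσt, hB, hprod]

lemma tGrad_apply_single (hm : 0 < m) (B : (Fin m → Fin n) → ℝ) (hsym : IsSymmetricTensor B)
    (x : Fin n → ℝ) (i : Fin n) :
    tGrad B x (Pi.single i 1) = m * rowApply B x i := by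
  unfold tGrad
  rw [ContinuousLinearMap.sum_apply]
  calc ∑ α : Fin m → Fin n, (B α • ∑ t : Fin m,
        (∏ s ∈ univ.erase t, x (α s)) • (ContinuousLinearMap.proj (α t) : (Fin n → ℝ) →L[ℝ] ℝ))
          (Pi.single i 1)
      = ∑ α : Fin m → Fin n, ∑ t : Fin m,
          (if α t = i then B α * ∏ s ∈ univ.erase t, x (α s) else 0) := by
        refine Finset.sum_congr rfl fun α _ => ?_
        rw [ContinuousLinearMap.smul_apply, ContinuousLinearMap.sum_apply, smul_eq_mul,
          Finset.mul_sum]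
        refine Finset.sum_congr rfl fun t _ => ?_
        rw [ContinuousLinearMap.smul_apply, ContinuousLinearMap.proj_apply, smul_eq_mul,
          Pi.single_apply]
        by_cases h : α t = i
        · simp only [h, if_true, mul_one]
        · simp only [h, if_false, mul_zero]
    _ = ∑ t : Fin m, ∑ α : Fin m → Fin n,
          (if α t = i then B α * ∏ s ∈ univ.erase t, x (α s) else 0) := Finset.sum_comm
    _ = ∑ _t : Fin m, rowApply B x i :=
        Finset.sum_congr rfl fun t _ => row_sum_eq hm B hsym x i t
    _ = m * rowApply B x i := by
        rw [Finset.sum_const, card_univ, Fintype.card_fin, nsmul_eq_mul]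

noncomputable def gGrad (m : ℕ) {n : ℕ} (x : Fin n → ℝ) : (Fin n → ℝ) →L[ℝ] ℝ :=
  ∑ i : Fin n, ((m : ℝ) * x i ^ (m - 1)) • (ContinuousLinearMap.proj i : (Fin n → ℝ) →L[ℝ] ℝ)

lemma hasStrictFDerivAt_gFun (x : Fin n → ℝ) :
    HasStrictFDerivAt (fun y : Fin n → ℝ => ∑ i, y i ^ m) (gGrad m x) x := by
  unfold gGrad
  refine HasStrictFDerivAt.fun_sum fun i _ => ?_
  have h1 : HasStrictDerivAt (fun u : ℝ => u ^ m) ((m : ℝ) * x i ^ (m - 1)) (x i) :=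
    hasStrictDerivAt_pow m (x i)
  have h2 : HasStrictFDerivAt (𝕜 := ℝ) (fun y : Fin n → ℝ => y i)
      (ContinuousLinearMap.proj i) x :=
    hasStrictFDerivAt_apply (𝕜 := ℝ) i x
  exact h1.comp_hasStrictFDerivAt x h2

lemma gGrad_apply_single (x : Fin n → ℝ) (j : Fin n) :
    gGrad m x (Pi.single j 1) = (m : ℝ) * x j ^ (m - 1) := by
  unfold gGrad
  rw [ContinuousLinearMap.sum_apply]
  rw [Finset.sum_eq_single j]
  · simp
  · intro i _ hij
    simp [Pi.single_apply, hij.symm]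
  · intro h; exact absurd (mem_univ j) h

end Stmt9Aux
namespace Stmt9Aux
open Finset

variable {m n : ℕ}

lemma spike_mem_offRowSet (hm : 2 ≤ m) {p j : Fin n} (hpj : j ≠ p) :
    spike m n p j ∈ offRowSet m n p := by
  have hm0 : 0 < m := by omega
  rw [offRowSet, mem_filter]
  refine ⟨mem_univ _, fun t ht => by simp [spike, ht], ?_⟩
  intro hc
  have h1 : spike m n p j ⟨1, by omega⟩ = p := by rw [hc]
  simp only [spike] at h1
  norm_num at h1
  exact hpj h1

lemma prod_spike (hm : 0 < m) (x : Fin n → ℝ) (p j : Fin n) :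
    ∏ t ∈ univ.filter (fun t : Fin m => (t : ℕ) ≠ 0), x (spike m n p j t)
      = x j ^ (m - 1) := by
  rw [← card_filterT (m := m) hm]
  rw [Finset.prod_congr rfl (fun t ht => ?_), Finset.prod_const]
  rw [mem_filter] at ht
  simp [spike, ht.2]

lemma abs_prod_le (x : Fin n → ℝ) {u : ℝ} (hu : ∀ k, |x k| ≤ u) (hm : 0 < m)
    (α : Fin m → Fin n) :
    |∏ t ∈ univ.filter (fun t : Fin m => (t : ℕ) ≠ 0), x (α t)| ≤ u ^ (m - 1) := by
  rw [Finset.abs_prod, ← card_filterT (m := m) hm, ← Finset.prod_const]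
  exact Finset.prod_le_prod (fun t _ => abs_nonneg _) (fun t _ => hu (α t))

/-- No H-eigenvalue of a Q-DSDD tensor with positive diagonal is ≤ 0. -/
lemma no_nonpos_eigen (hm : 2 < m) (hn : 1 < n) (B : (Fin m → Fin n) → ℝ)
    (hdiag : ∀ k : Fin n, 0 < diagEntry B k) (hB : IsQDSDD B)
    (x : Fin n → ℝ) (hx : x ≠ 0) (lam : ℝ) (hlam : lam ≤ 0)
    (heig : ∀ i, rowApply B x i = lam * x i ^ (m - 1)) : False := by
  have hm0 : 0 < m := by omega
  -- maximal coordinate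
  haveI : Nonempty (Fin n) := ⟨⟨0, by omega⟩⟩
  obtain ⟨p, -, hp⟩ := Finset.exists_max_image univ (fun k => |x k|) univ_nonempty
  have hp' : ∀ k, |x k| ≤ |x p| := fun k => hp k (mem_univ k)
  set u : ℝ := |x p| with hu
  have hu0 : 0 < u := by
    obtain ⟨k, hk⟩ := Function.ne_iff.1 hx
    have : (0 : ℝ) < |x k| := abs_pos.2 (by simpa using hk)
    exact lt_of_lt_of_le this (hp' k)
  set U : ℝ := u ^ (m - 1) with hU
  have hU0 : 0 < U := pow_pos hu0 _
  -- second index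
  obtain ⟨j, hjp⟩ := Fintype.exists_ne_of_one_lt_card (by simpa using hn) p
  -- Q-DSDD condition at (j, p)
  have hcond := hB j p hjp
  set c : ℝ := |B (spike m n p j)| with hc
  set rp : ℝ := rowAbsSum B p with hrp
  set rj : ℝ := rowAbsSum B j with hrj
  have happ : |diagEntry B p| = diagEntry B p := abs_of_pos (hdiag p)
  have hajj : |diagEntry B j| = diagEntry B j := abs_of_pos (hdiag j)
  rw [happ, hajj] at hcond
  have hsub : rowAbsSubSum B p j = rp - c := rfl
  rw [hsub] at hcond
  -- hcond : rj * c < diagEntry B j * (diagEntry B p - (rp - c))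
  set D : ℝ := diagEntry B p - (rp - c) with hD
  have hD0 : 0 < D := by
    by_contra h
    push_neg at h
    have h1 : diagEntry B j * D ≤ 0 :=
      mul_nonpos_of_nonneg_of_nonpos (le_of_lt (hdiag j)) h
    have h2 : 0 ≤ rj * c :=
      mul_nonneg (Finset.sum_nonneg fun α _ => abs_nonneg _) (abs_nonneg _)
    linarith
  set W : ℝ := |x j| ^ (m - 1) with hW
  have hW0 : 0 ≤ W := pow_nonneg (abs_nonneg _) _
  set T : Finset (Fin m) := univ.filter (fun t : Fin m => (t : ℕ) ≠ 0) with hT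
  set P : (Fin m → Fin n) → ℝ := fun α => ∏ t ∈ T, x (α t) with hP
  -- generic off-row bound
  have hoff : ∀ i : Fin n, (diagEntry B i - lam) * |x i ^ (m - 1)|
      ≤ ∑ α ∈ offRowSet m n i, |B α| * |P α| := by
    intro i
    have hdec := rowApply_decomp hm0 B x i
    rw [heig i] at hdec
    have hS : ∑ α ∈ offRowSet m n i, B α * P α
        = (lam - diagEntry B i) * x i ^ (m - 1) := by
      rw [hP, hT]; linarith [hdec]
    calc (diagEntry B i - lam) * |x i ^ (m - 1)|
        = |(lam - diagEntry B i) * x i ^ (m - 1)| := by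
          rw [abs_mul]
          congr 1
          rw [abs_of_nonpos (by linarith [hdiag i])]
          ring
      _ = |∑ α ∈ offRowSet m n i, B α * P α| := by rw [hS]
      _ ≤ ∑ α ∈ offRowSet m n i, |B α * P α| := Finset.abs_sum_le_sum_abs _ _
      _ = ∑ α ∈ offRowSet m n i, |B α| * |P α| := by
          exact Finset.sum_congr rfl fun α _ => abs_mul _ _
  have habsU : ∀ α : Fin m → Fin n, |P α| ≤ U :=
    fun α => abs_prod_le x hp' hm0 α
  -- row j inequality:  diag j * W ≤ rj * U
  have hrowj : diagEntry B j * W ≤ rj * U := by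
    have h1 := hoff j
    have h2 : ∑ α ∈ offRowSet m n j, |B α| * |P α| ≤ rj * U := by
      rw [hrj, rowAbsSum, Finset.sum_mul]
      exact Finset.sum_le_sum fun α _ =>
        mul_le_mul_of_nonneg_left (habsU α) (abs_nonneg _)
    have h3 : |x j ^ (m - 1)| = W := by rw [abs_pow, hW]
    have h4 : diagEntry B j * W ≤ (diagEntry B j - lam) * W :=
      mul_le_mul_of_nonneg_right (by linarith) hW0
    rw [h3] at h1
    linarith
  -- row p inequality:  D * U ≤ c * W
  have hrowp : D * U ≤ c * W := by
    have h1 := hoff p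
    have hmem := spike_mem_offRowSet (le_of_lt hm) hjp
    have hPspike : |P (spike m n p j)| = W := by
      show |∏ t ∈ T, x (spike m n p j t)| = W
      rw [hT, prod_spike hm0, abs_pow, hW]
    have h2 : ∑ α ∈ offRowSet m n p, |B α| * |P α|
        ≤ c * W + (rp - c) * U := by
      have hsplit : ∑ α ∈ (offRowSet m n p).erase (spike m n p j), |B α| * |P α|
          = (∑ α ∈ offRowSet m n p, |B α| * |P α|)
            - |B (spike m n p j)| * |P (spike m n p j)| :=
        Finset.sum_erase_eq_sub hmem
      have h5 : ∑ α ∈ (offRowSet m n p).erase (spike m n p j), |B α| * |P α|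
          ≤ ∑ α ∈ (offRowSet m n p).erase (spike m n p j), |B α| * U :=
        Finset.sum_le_sum fun α _ =>
          mul_le_mul_of_nonneg_left (habsU α) (abs_nonneg _)
      have h6 : ∑ α ∈ (offRowSet m n p).erase (spike m n p j), |B α| = rp - c := by
        have h8 : ∑ α ∈ (offRowSet m n p).erase (spike m n p j), |B α|
            = (∑ α ∈ offRowSet m n p, |B α|) - |B (spike m n p j)| :=
          Finset.sum_erase_eq_sub hmem
        rw [h8, ← hc]
        have : ∑ α ∈ offRowSet m n p, |B α| = rp := rfl
        rw [this]
      have h7 : ∑ α ∈ (offRowSet m n p).erase (spike m n p j), |B α| * U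
          = (rp - c) * U := by rw [← Finset.sum_mul, h6]
      have h9 : |B (spike m n p j)| * |P (spike m n p j)| = c * W := by
        rw [hPspike, ← hc]
      linarith
    have h3 : |x p ^ (m - 1)| = U := by rw [abs_pow, ← hu, hU]
    have h4 : diagEntry B p * U ≤ (diagEntry B p - lam) * U :=
      mul_le_mul_of_nonneg_right (by linarith) (le_of_lt hU0)
    rw [h3] at h1
    have := le_trans h1 h2
    -- diag p * U ≤ c * W + (rp - c) * U
    rw [hD]
    nlinarith
  -- combine
  have hfinal : diagEntry B j * D ≤ rj * c := by
    have h1 : diagEntry B j * (D * U) ≤ diagEntry B j * (c * W) :=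
      mul_le_mul_of_nonneg_left hrowp (le_of_lt (hdiag j))
    have h2 : c * (diagEntry B j * W) ≤ c * (rj * U) :=
      mul_le_mul_of_nonneg_left hrowj (abs_nonneg _)
    have h3 : diagEntry B j * D * U ≤ rj * c * U := by nlinarith
    exact le_of_mul_le_mul_right h3 hU0
  linarith

end Stmt9Aux
namespace Stmt9Aux
open Finset

variable {m n : ℕ}

/-- The constraint function `y ↦ ∑ i, y i ^ m`. -/
def gFun (m : ℕ) {n : ℕ} (y : Fin n → ℝ) : ℝ := ∑ i, y i ^ m

lemma hasStrictFDerivAt_gFun' (x : Fin n → ℝ) :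
    HasStrictFDerivAt (gFun m) (gGrad m x) x := hasStrictFDerivAt_gFun x

end Stmt9Aux

open Stmt9Aux in
/-- an even order (`m > 2`) symmetric Q-DSDD tensor of dimension `n > 2`
with positive diagonal entries is positive definite. -/
theorem stmt9 (m n : ℕ) (hm : 2 < m) (hme : Even m) (hn : 2 < n)
    (A : (Fin m → Fin n) → ℝ) (hsym : IsSymmetricTensor A)
    (hdiag : ∀ k : Fin n, 0 < diagEntry A k) (hA : IsQDSDD A) :
    IsPosDefTensor A := by
  classical
  have hm0 : 0 < m := by omega
  have hmna : (m : ℝ) ≠ 0 := Nat.cast_ne_zero.2 hm0.ne'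
  intro x hx
  by_contra hle
  have hxle : tensorApply A x ≤ 0 := not_lt.1 hle
  -- the constraint function is positive off zero
  have hgpos : ∀ y : Fin n → ℝ, y ≠ 0 → 0 < gFun m y := by
    intro y hy
    obtain ⟨k, hk⟩ := Function.ne_iff.1 hy
    exact Finset.sum_pos' (fun i _ => hme.pow_nonneg _)
      ⟨k, Finset.mem_univ _, hme.pow_pos (by simpa using hk)⟩
  have hgc : Continuous (gFun m (n := n)) :=
    continuous_finset_sum _ fun i _ => (continuous_apply i).pow m
  have htc : Continuous (tensorApply A) :=
    continuous_finset_sum _ fun α _ =>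
      continuous_const.mul (continuous_finset_prod _ fun t _ => continuous_apply (α t))
  set S : Set (Fin n → ℝ) := {y | gFun m y = 1} with hSdef
  have hSc : IsClosed S := isClosed_eq hgc continuous_const
  have hSb : S ⊆ Metric.closedBall 0 1 := by
    intro y hy
    rw [Metric.mem_closedBall, dist_zero_right,
      pi_norm_le_iff_of_nonneg (by norm_num : (0:ℝ) ≤ 1)]
    intro i
    rw [Real.norm_eq_abs, ← pow_le_one_iff_of_nonneg (abs_nonneg _) hm0.ne', hme.pow_abs]
    have h1 : y i ^ m ≤ gFun m y :=
      Finset.single_le_sum (fun k _ => hme.pow_nonneg (y k)) (Finset.mem_univ i)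
    have h2 : gFun m y = 1 := hy
    linarith
  have hScomp : IsCompact S := Metric.isCompact_of_isClosed_isBounded hSc
      (Metric.isBounded_closedBall.subset hSb)
  have hSne : S.Nonempty := by
    refine ⟨Pi.single ⟨0, by omega⟩ 1, ?_⟩
    show gFun m (Pi.single (⟨0, by omega⟩ : Fin n) (1:ℝ)) = 1
    unfold gFun
    calc ∑ i : Fin n, Pi.single (⟨0, by omega⟩ : Fin n) (1:ℝ) i ^ m
        = ∑ i : Fin n, (if i = ⟨0, by omega⟩ then (1:ℝ) else 0) := by
          refine Finset.sum_congr rfl fun i _ => ?_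
          rw [Pi.single_apply]
          split <;> simp [zero_pow hm0.ne']
      _ = 1 := by rw [Finset.sum_ite_eq' Finset.univ _ (fun _ => (1:ℝ))]; simp
  obtain ⟨x₀, hx₀S, hmin⟩ := hScomp.exists_isMinOn hSne htc.continuousOn
  have hgx₀ : gFun m x₀ = 1 := hx₀S
  have hx₀ne : x₀ ≠ 0 := by
    rintro rfl
    unfold gFun at hgx₀
    simp [zero_pow hm0.ne'] at hgx₀
  -- Lagrange multipliers
  have hext : IsLocalExtrOn (tensorApply A) {y | gFun m y = gFun m x₀} x₀ := by
    have hset : {y : Fin n → ℝ | gFun m y = gFun m x₀} = S := by rw [hgx₀]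
    rw [hset]
    exact Or.inl (hmin.filter_mono (Filter.le_principal_iff.mpr self_mem_nhdsWithin))
  obtain ⟨a, b, hab, heq⟩ := hext.exists_multipliers_of_hasStrictFDerivAt_1d
    (hasStrictFDerivAt_gFun' x₀) (hasStrictFDerivAt_tensorApply A x₀)
  have heval : ∀ i, a * ((m : ℝ) * x₀ i ^ (m - 1)) + b * ((m : ℝ) * rowApply A x₀ i) = 0 := by
    intro i
    have h1 := ContinuousLinearMap.ext_iff.1 heq (Pi.single i 1)
    rw [ContinuousLinearMap.add_apply, ContinuousLinearMap.smul_apply,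
      ContinuousLinearMap.smul_apply, ContinuousLinearMap.zero_apply, smul_eq_mul,
      smul_eq_mul, gGrad_apply_single, tGrad_apply_single hm0 A hsym] at h1
    exact h1
  have hkey : ∀ i, a * x₀ i ^ (m - 1) + b * rowApply A x₀ i = 0 := by
    intro i
    have h1 := heval i
    have h1' : (m : ℝ) * (a * x₀ i ^ (m - 1) + b * rowApply A x₀ i) = 0 := by ring_nf; ring_nf at h1; linarith
    exact (mul_eq_zero.1 h1').resolve_left hmna
  have hbne : b ≠ 0 := by
    rintro rfl
    have hane : a ≠ 0 := by
      intro ha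
      exact hab (by simp [ha, Prod.ext_iff])
    have hzero : ∀ i, x₀ i = 0 := by
      intro i
      have h2 : a * x₀ i ^ (m - 1) = 0 := by have := hkey i; linarith
      have h3 : x₀ i ^ (m - 1) = 0 := by
        rcases mul_eq_zero.1 h2 with h | h
        · exact absurd h hane
        · exact h
      exact pow_eq_zero_iff (by omega : m - 1 ≠ 0) |>.1 h3
    exact hx₀ne (funext hzero)
  set lam : ℝ := -a / b with hlam_def
  have heig : ∀ i, rowApply A x₀ i = lam * x₀ i ^ (m - 1) := by
    intro i
    have h1 := hkey i
    rw [hlam_def]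
    field_simp
    linarith
  -- the minimum value equals lam
  have hlam_val : tensorApply A x₀ = lam := by
    rw [tensorApply_eq_sum hm0 A x₀]
    have hstep : ∀ i : Fin n, x₀ i * rowApply A x₀ i = lam * x₀ i ^ m := by
      intro i
      rw [heig i]
      have hmm : m - 1 + 1 = m := by omega
      calc x₀ i * (lam * x₀ i ^ (m - 1)) = lam * (x₀ i ^ (m - 1) * x₀ i) := by ring
        _ = lam * x₀ i ^ (m - 1 + 1) := by rw [pow_succ]
        _ = lam * x₀ i ^ m := by rw [hmm]
    calc ∑ i, x₀ i * rowApply A x₀ i = ∑ i, lam * x₀ i ^ m :=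
          Finset.sum_congr rfl fun i _ => hstep i
      _ = lam * gFun m x₀ := by rw [← Finset.mul_sum]; rfl
      _ = lam := by rw [hgx₀, mul_one]
  -- the minimum is ≤ 0 since tensorApply A x ≤ 0
  have hgx : 0 < gFun m x := hgpos x hx
  set cc : ℝ := gFun m x ^ ((m : ℝ)⁻¹) with hcc
  have hc0 : 0 < cc := Real.rpow_pos_of_pos hgx _
  have hcm : cc ^ m = gFun m x := Real.rpow_inv_natCast_pow (le_of_lt hgx) hm0.ne'
  have hyS : cc⁻¹ • x ∈ S := by
    show gFun m (cc⁻¹ • x) = 1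
    have h1 : gFun m (cc⁻¹ • x) = (cc⁻¹) ^ m * gFun m x := by
      unfold gFun
      rw [Finset.mul_sum]
      exact Finset.sum_congr rfl fun i _ => by
        rw [Pi.smul_apply, smul_eq_mul, mul_pow]
    rw [h1, inv_pow, hcm, inv_mul_cancel₀ hgx.ne']
  have hyval : tensorApply A (cc⁻¹ • x) ≤ 0 := by
    rw [tensorApply_smul]
    exact mul_nonpos_of_nonneg_of_nonpos (pow_nonneg (inv_nonneg.2 hc0.le) m) hxle
  have hlam_le : lam ≤ 0 := by
    have h1 := isMinOn_iff.1 hmin _ hyS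
    linarith [hlam_val]
  exact no_nonpos_eigen hm (by omega : 1 < n) A hdiag hA x₀ hx₀ne lam hlam_le heig
end

section
/- Let B = (b_{i1...im}) be a symmetric quasi-double B-tensor of order m ≥ 2 and dimension n ≥ 2. Then either B is itself a Z-tensor, or there exist a positive integer s, positive reals h_1,...,h_s, subsets Ĵ_1,...,Ĵ_s of {1,...,n}, and a symmetric Z-tensor M which is a quasi-double B-tensor, such that B = M + Σ_{k=1}^{s} h_k ε^{Ĵ_k}. -/
open Finset

namespace Stmt10Aux

variable {m n : ℕ}

/-- The set of rows with a positive off-diagonal entry. -/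
noncomputable def Jset (B : (Fin m → Fin n) → ℝ) : Finset (Fin n) :=
  Finset.univ.filter fun i => 0 < betaMax B i

lemma mem_Jset {B : (Fin m → Fin n) → ℝ} {i : Fin n} :
    i ∈ Jset B ↔ 0 < betaMax B i := by simp [Jset]

lemma mem_offRowSet {i : Fin n} {α : Fin m → Fin n} :
    α ∈ offRowSet m n i ↔ (∀ t : Fin m, (t : ℕ) = 0 → α t = i) ∧ α ≠ fun _ => i := by
  simp [offRowSet]

lemma le_betaMax {B : (Fin m → Fin n) → ℝ} {i : Fin n} {α : Fin m → Fin n}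
    (hα : α ∈ offRowSet m n i) : B α ≤ betaMax B i :=
  (Finset.le_fold_max _).mpr (Or.inr ⟨α, hα, le_rfl⟩)

lemma betaMax_nonneg (B : (Fin m → Fin n) → ℝ) (i : Fin n) : 0 ≤ betaMax B i :=
  (Finset.le_fold_max _).mpr (Or.inl le_rfl)

lemma betaMax_attained {B : (Fin m → Fin n) → ℝ} {i : Fin n} (h : 0 < betaMax B i) :
    ∃ α ∈ offRowSet m n i, B α = betaMax B i := by
  have h2 : betaMax B i ≤ (offRowSet m n i).fold max 0 B := le_rfl
  rcases (Finset.le_fold_max _).mp h2 with h3 | ⟨α, hα, h3⟩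
  · linarith
  · exact ⟨α, hα, le_antisymm (le_betaMax hα) h3⟩

/-- Permutation symmetry: any non-constant entry touching index `j` is bounded by `β_j`. -/
lemma touch_le_betaMax (hm : 0 < m) {B : (Fin m → Fin n) → ℝ}
    (hsym : IsSymmetricTensor B) {α : Fin m → Fin n} {j : Fin n} (t : Fin m)
    (hj : α t = j) (hne : α ≠ fun _ => j) : B α ≤ betaMax B j := by
  set t0 : Fin m := ⟨0, hm⟩ with ht0
  set σ : Equiv.Perm (Fin m) := Equiv.swap t0 t with hσ
  have key : B (α ∘ σ) = B α := hsym σ α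
  have hmem : (α ∘ σ) ∈ offRowSet m n j := by
    rw [mem_offRowSet]
    constructor
    · intro s hs
      have hst0 : s = t0 := Fin.ext hs
      subst hst0
      simp only [Function.comp_apply, hσ, Equiv.swap_apply_left]
      exact hj
    · intro hcontra
      apply hne
      funext u
      have h2 := congrFun hcontra (σ.symm u)
      simpa using h2
  calc B α = B (α ∘ σ) := key.symm
    _ ≤ betaMax B j := le_betaMax hmem

lemma notfull_nonpos (hm : 0 < m) {B : (Fin m → Fin n) → ℝ}
    (hsym : IsSymmetricTensor B) {i : Fin n} {α : Fin m → Fin n}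
    (hα : α ∈ offRowSet m n i) {j : Fin n} (t : Fin m) (ht : α t = j)
    (hβ : betaMax B j ≤ 0) : B α ≤ 0 := by
  obtain ⟨h1, h2⟩ := mem_offRowSet.mp hα
  have hne : α ≠ fun _ => j := by
    intro hc
    have hi : α (⟨0, hm⟩ : Fin m) = i := h1 _ rfl
    have hji : j = i := by rw [hc] at hi; exact hi
    exact h2 (by rw [hc, hji])
  exact le_trans (touch_le_betaMax hm hsym t ht hne) hβ

lemma isZ_of_Jset_empty (hm : 0 < m) {B : (Fin m → Fin n) → ℝ}
    (hJ : Jset B = ∅) : IsZTensor B := by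
  rintro α ⟨s, t, hst⟩
  set t0 : Fin m := ⟨0, hm⟩ with ht0
  set i := α t0 with hi
  have hβ : betaMax B i ≤ 0 := by
    by_contra hc
    push_neg at hc
    have : i ∈ Jset B := mem_Jset.mpr hc
    simp [hJ] at this
  have hmem : α ∈ offRowSet m n i := by
    rw [mem_offRowSet]
    refine ⟨fun u hu => by rw [show u = t0 from Fin.ext hu], fun hc => hst ?_⟩
    rw [hc]
  exact le_trans (le_betaMax hmem) hβ

lemma spike_mem_offRowSet (hm : 2 ≤ m) {i j : Fin n} (hij : i ≠ j) :
    spike m n j i ∈ offRowSet m n j := by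
  rw [mem_offRowSet]
  constructor
  · intro t ht
    simp [spike, ht]
  · intro hc
    have h2 := congrFun hc (⟨1, hm⟩ : Fin m)
    simp [spike] at h2
    exact hij h2

lemma step (hm : 2 ≤ m) {B : (Fin m → Fin n) → ℝ}
    (hsym : IsSymmetricTensor B) (hB : IsQuasiDoubleBTensor B)
    (hJ : (Jset B).Nonempty) :
    ∃ h1 : ℝ, 0 < h1 ∧ ∃ B₂ : (Fin m → Fin n) → ℝ,
      IsSymmetricTensor B₂ ∧ IsQuasiDoubleBTensor B₂ ∧
      Jset B₂ ⊂ Jset B ∧ ∀ α, B α = B₂ α + h1 * epsTensor m n (Jset B) α := by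
  have hm0 : 0 < m := by omega
  set t0 : Fin m := ⟨0, hm0⟩ with ht0
  set t1 : Fin m := ⟨1, hm⟩ with ht1
  obtain ⟨i₀, hi₀J, hi₀min⟩ := Finset.exists_min_image (Jset B) (betaMax B) hJ
  set J : Finset (Fin n) := Jset B with hJdef
  set h1 : ℝ := betaMax B i₀ with hh1
  have h1pos : 0 < h1 := mem_Jset.mp hi₀J
  set B₂ : (Fin m → Fin n) → ℝ := fun α => B α - h1 * epsTensor m n J α with hB₂def
  -- basic facts about epsTensor
  have eps_one : ∀ α : Fin m → Fin n, (∀ t, α t ∈ J) → epsTensor m n J α = 1 :=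
    fun α h => if_pos h
  have eps_zero : ∀ (α : Fin m → Fin n) (t : Fin m), α t ∉ J → epsTensor m n J α = 0 :=
    fun α t h => if_neg (fun hh => h (hh t))
  have eps_nonneg : ∀ α : Fin m → Fin n, 0 ≤ epsTensor m n J α := by
    intro α; unfold epsTensor; split <;> norm_num
  have eps_le_one : ∀ α : Fin m → Fin n, epsTensor m n J α ≤ 1 := by
    intro α; unfold epsTensor; split <;> norm_num
  have hβ_of_notJ : ∀ {j : Fin n}, j ∉ J → betaMax B j ≤ 0 := by
    intro j hj
    by_contra hc
    exact hj (mem_Jset.mpr (by linarith [not_lt.mp fun h => hj (mem_Jset.mpr h)]))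
  -- entries not fully supported in J are nonpositive
  have notfull : ∀ {i : Fin n} {α : Fin m → Fin n}, α ∈ offRowSet m n i →
      (∃ t, α t ∉ J) → B α ≤ 0 := by
    rintro i α hα ⟨t, ht⟩
    exact notfull_nonpos hm0 hsym hα t rfl (hβ_of_notJ ht)
  -- rows outside J are untouched
  have row_unch : ∀ i ∉ J, ∀ α : Fin m → Fin n,
      (∀ t : Fin m, (t : ℕ) = 0 → α t = i) → B₂ α = B α := by
    intro i hi α hα
    have : α t0 = i := hα t0 rfl
    rw [hB₂def]
    simp [eps_zero α t0 (by rw [this]; exact hi)]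
  have beta_unch : ∀ i ∉ J, betaMax B₂ i = betaMax B i := by
    intro i hi
    unfold betaMax
    exact Finset.fold_congr (fun α hα => row_unch i hi α (mem_offRowSet.mp hα).1)
  have delta_unch : ∀ i ∉ J, DeltaSum B₂ i = DeltaSum B i := by
    intro i hi
    unfold DeltaSum
    exact Finset.sum_congr rfl fun α hα => by
      rw [beta_unch i hi, row_unch i hi α (mem_offRowSet.mp hα).1]
  have diag_unch : ∀ i ∉ J, diagEntry B₂ i = diagEntry B i := by
    intro i hi
    unfold diagEntry
    exact row_unch i hi _ (fun t _ => rfl)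
  have diag_drop : ∀ i ∈ J, diagEntry B₂ i = diagEntry B i - h1 := by
    intro i hi
    unfold diagEntry
    rw [hB₂def]
    simp [eps_one _ (fun t => hi)]
  have h1_le_beta : ∀ i ∈ J, h1 ≤ betaMax B i := hi₀min
  have beta_drop : ∀ i ∈ J, betaMax B₂ i = betaMax B i - h1 := by
    intro i hi
    have hβpos : 0 < betaMax B i := mem_Jset.mp hi
    have hub : betaMax B₂ i ≤ betaMax B i - h1 := by
      refine (Finset.fold_max_le _).mpr ⟨by linarith [h1_le_beta i hi], ?_⟩
      intro α hα
      by_cases hfull : ∀ t, α t ∈ J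
      · have : B₂ α = B α - h1 := by rw [hB₂def]; simp [eps_one α hfull]
        rw [this]
        linarith [le_betaMax (B := B) hα]
      · push_neg at hfull
        have h0 : B α ≤ 0 := notfull hα hfull
        obtain ⟨t, ht⟩ := hfull
        have : B₂ α = B α := by rw [hB₂def]; simp [eps_zero α t ht]
        rw [this]
        linarith [h1_le_beta i hi]
    have hlb : betaMax B i - h1 ≤ betaMax B₂ i := by
      obtain ⟨α, hα, hval⟩ := betaMax_attained hβpos
      have hfull : ∀ t, α t ∈ J := by
        intro t
        by_contra hc
        have := notfull hα ⟨t, hc⟩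
        linarith
      have hv : B₂ α = betaMax B i - h1 := by
        rw [hB₂def]; simp [eps_one α hfull, hval]
      exact (Finset.le_fold_max _).mpr (Or.inr ⟨α, hα, le_of_eq hv.symm⟩)
    linarith
  have delta_le : ∀ i, DeltaSum B₂ i ≤ DeltaSum B i := by
    intro i
    by_cases hi : i ∈ J
    · unfold DeltaSum
      refine Finset.sum_le_sum fun α hα => ?_
      rw [beta_drop i hi, hB₂def]
      have h2 := mul_le_mul_of_nonneg_left (eps_le_one α) h1pos.le
      simp only
      linarith
    · rw [delta_unch i hi]
  have delta_nonneg : ∀ (C : (Fin m → Fin n) → ℝ) (i : Fin n), 0 ≤ DeltaSum C i := by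
    intro C i
    refine Finset.sum_nonneg fun α hα => ?_
    linarith [le_betaMax (B := C) hα]
  have spike_eps0 : ∀ {i j : Fin n}, i ∉ J → epsTensor m n J (spike m n j i) = 0 := by
    intro i j hi
    refine eps_zero _ t1 ?_
    have : spike m n j i t1 = i := by simp [spike, ht1]
    rw [this]; exact hi
  have delta_gap : ∀ i ∉ J, ∀ j ∈ J, i ≠ j →
      h1 ≤ DeltaSum B j - DeltaSum B₂ j := by
    intro i hi j hj hij
    have hsum : DeltaSum B j - DeltaSum B₂ j =
        ∑ α ∈ offRowSet m n j,
          ((betaMax B j - B α) - (betaMax B₂ j - B₂ α)) := by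
      unfold DeltaSum
      rw [← Finset.sum_sub_distrib]
    rw [hsum]
    have hterm : ∀ α ∈ offRowSet m n j,
        (betaMax B j - B α) - (betaMax B₂ j - B₂ α)
          = h1 - h1 * epsTensor m n J α := by
      intro α hα
      rw [beta_drop j hj, hB₂def]
      ring
    have hnn : ∀ α ∈ offRowSet m n j,
        0 ≤ (betaMax B j - B α) - (betaMax B₂ j - B₂ α) := by
      intro α hα
      rw [hterm α hα]
      have h2 := mul_le_mul_of_nonneg_left (eps_le_one α) h1pos.le
      linarith
    have hmem := spike_mem_offRowSet hm hij
    have hval : (betaMax B j - B (spike m n j i))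
        - (betaMax B₂ j - B₂ (spike m n j i)) = h1 := by
      rw [hterm _ hmem, spike_eps0 hi]
      ring
    calc h1 = _ := hval.symm
      _ ≤ _ := Finset.single_le_sum hnn hmem
  -- condition 1 for B₂
  have cond1 : ∀ i, betaMax B₂ i < diagEntry B₂ i := by
    intro i
    by_cases hi : i ∈ J
    · rw [beta_drop i hi, diag_drop i hi]
      linarith [hB.1 i]
    · rw [beta_unch i hi, diag_unch i hi]
      exact hB.1 i
  -- condition 2 for B₂
  have cond2 : ∀ i j, i ≠ j →
      (betaMax B₂ j - B₂ (spike m n j i)) * DeltaSum B₂ i <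
        (diagEntry B₂ i - betaMax B₂ i) *
          (diagEntry B₂ j - betaMax B₂ j - DeltaSubSum B₂ j i) := by
    intro i j hij
    have hQ := hB.2 i j hij
    unfold DeltaSubSum at hQ ⊢
    set P := betaMax B j - B (spike m n j i) with hP
    set P' := betaMax B₂ j - B₂ (spike m n j i) with hP'
    have hP'nonneg : 0 ≤ P' :=
      sub_nonneg.mpr (le_betaMax (B := B₂) (spike_mem_offRowSet hm hij))
    have hPnonneg : 0 ≤ P :=
      sub_nonneg.mpr (le_betaMax (B := B) (spike_mem_offRowSet hm hij))
    have hei : diagEntry B₂ i - betaMax B₂ i = diagEntry B i - betaMax B i := by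
      by_cases hi : i ∈ J
      · rw [beta_drop i hi, diag_drop i hi]; ring
      · rw [beta_unch i hi, diag_unch i hi]
    have heipos : 0 < diagEntry B i - betaMax B i := by linarith [hB.1 i]
    -- relation between P' and P, and the second factor comparison
    have hsecond :
        diagEntry B j - betaMax B j - (DeltaSum B j - P) ≤
          diagEntry B₂ j - betaMax B₂ j - (DeltaSum B₂ j - P') ∧ P' ≤ P := by
      by_cases hj : j ∈ J
      · by_cases hi : i ∈ J
        · have hPP : P' = P := by
            rw [hP', hP, beta_drop j hj, hB₂def]
            have : epsTensor m n J (spike m n j i) = 1 := by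
              refine eps_one _ fun t => ?_
              by_cases ht : (t : ℕ) = 0 <;> simp [spike, ht, hi, hj]
            simp only [this]
            ring
          refine ⟨?_, le_of_eq hPP⟩
          rw [hPP, beta_drop j hj, diag_drop j hj]
          have := delta_le j
          linarith
        · have hspike : B₂ (spike m n j i) = B (spike m n j i) := by
            rw [hB₂def]; simp [spike_eps0 hi]
          have hPP : P' = P - h1 := by
            rw [hP', hP, beta_drop j hj, hspike]; ring
          have hgap := delta_gap i hi j hj hij
          constructor
          · rw [hPP, beta_drop j hj, diag_drop j hj]
            linarith
          · rw [hPP]; linarith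
      · have hspike : B₂ (spike m n j i) = B (spike m n j i) := by
          refine row_unch j hj _ ?_
          intro t ht; simp [spike, ht]
        have hPP : P' = P := by rw [hP', hP, beta_unch j hj, hspike]
        refine ⟨?_, le_of_eq hPP⟩
        rw [hPP, beta_unch j hj, diag_unch j hj, delta_unch j hj]
    obtain ⟨hsec, hP'leP⟩ := hsecond
    have hDi := delta_le i
    have hDinn := delta_nonneg B i
    calc P' * DeltaSum B₂ i ≤ P' * DeltaSum B i := by
          exact mul_le_mul_of_nonneg_left hDi hP'nonneg
      _ ≤ P * DeltaSum B i := mul_le_mul_of_nonneg_right hP'leP hDinn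
      _ < (diagEntry B i - betaMax B i) *
            (diagEntry B j - betaMax B j - (DeltaSum B j - P)) := hQ
      _ ≤ (diagEntry B i - betaMax B i) *
            (diagEntry B₂ j - betaMax B₂ j - (DeltaSum B₂ j - P')) :=
          mul_le_mul_of_nonneg_left hsec heipos.le
      _ = (diagEntry B₂ i - betaMax B₂ i) *
            (diagEntry B₂ j - betaMax B₂ j - (DeltaSum B₂ j - P')) := by rw [hei]
  -- symmetry of B₂
  have hsym2 : IsSymmetricTensor B₂ := by
    intro σ α
    have hiff : (∀ t, (α ∘ σ) t ∈ J) ↔ (∀ t, α t ∈ J) :=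
      ⟨fun h u => by simpa using h (σ.symm u), fun h t => h _⟩
    rw [hB₂def]
    simp only [hsym σ α, epsTensor]
    rw [if_congr hiff rfl rfl]
  -- Jset shrinks strictly
  have hsub : Jset B₂ ⊆ J := by
    intro i hi
    by_contra hc
    have h2 := mem_Jset.mp hi
    rw [beta_unch i hc] at h2
    exact hc (mem_Jset.mpr h2)
  have hnotmem : i₀ ∉ Jset B₂ := by
    intro hc
    have h2 := mem_Jset.mp hc
    rw [beta_drop i₀ hi₀J] at h2
    simp only [← hh1] at h2
    linarith
  have hss : Jset B₂ ⊂ J :=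
    (Finset.ssubset_iff_of_subset hsub).mpr ⟨i₀, hi₀J, hnotmem⟩
  exact ⟨h1, h1pos, B₂, hsym2, ⟨cond1, cond2⟩, hss,
    fun α => by rw [hB₂def]; ring⟩

lemma main (hm : 2 ≤ m) :
    ∀ (N : ℕ) (B : (Fin m → Fin n) → ℝ), (Jset B).card ≤ N →
      IsSymmetricTensor B → IsQuasiDoubleBTensor B →
      IsZTensor B ∨
        ∃ (s : ℕ), 0 < s ∧
          ∃ (h : Fin s → ℝ) (J : Fin s → Finset (Fin n)) (M : (Fin m → Fin n) → ℝ),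
            (∀ k, 0 < h k) ∧ IsSymmetricTensor M ∧ IsZTensor M ∧
              IsQuasiDoubleBTensor M ∧
              ∀ α, B α = M α + ∑ k, h k * epsTensor m n (J k) α := by
  have hm0 : 0 < m := by omega
  intro N
  induction N with
  | zero =>
    intro B hcard _ _
    left
    exact isZ_of_Jset_empty hm0 (Finset.card_eq_zero.mp (Nat.le_zero.mp hcard))
  | succ N ih =>
    intro B hcard hsym hB
    by_cases hJ : (Jset B).Nonempty
    · obtain ⟨h1, h1pos, B₂, hsym2, hB2, hss, hdecomp⟩ := step hm hsym hB hJ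
      have hcard2 : (Jset B₂).card ≤ N := by
        have := Finset.card_lt_card hss
        omega
      rcases ih B₂ hcard2 hsym2 hB2 with hZ |
        ⟨s, hs, h, Jf, M, hh, hMsym, hMZ, hMqd, heq⟩
      · right
        refine ⟨1, one_pos, fun _ => h1, fun _ => Jset B, B₂,
          fun _ => h1pos, hsym2, hZ, hB2, fun α => ?_⟩
        rw [hdecomp α]
        simp
      · right
        refine ⟨s + 1, by omega, Fin.cons h1 h, Fin.cons (Jset B) Jf, M,
          ?_, hMsym, hMZ, hMqd, fun α => ?_⟩
        · intro k
          refine Fin.cases ?_ ?_ k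
          · simpa using h1pos
          · intro k'; simpa using hh k'
        · rw [hdecomp α, heq α, Fin.sum_univ_succ]
          simp only [Fin.cons_zero, Fin.cons_succ]
          ring
    · left
      exact isZ_of_Jset_empty hm0 (Finset.not_nonempty_iff_eq_empty.mp hJ)

end Stmt10Aux

/-- a symmetric quasi-double B-tensor is either a Z-tensor, or it is
the sum of a symmetric Z-tensor which is a quasi-double B-tensor and a positive
combination of partially all one tensors. -/
theorem stmt10 (m n : ℕ) (hm : 2 ≤ m) (hn : 2 ≤ n) (B : (Fin m → Fin n) → ℝ)
    (hsym : IsSymmetricTensor B) (hB : IsQuasiDoubleBTensor B) :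
    IsZTensor B ∨
      ∃ (s : ℕ), 0 < s ∧
        ∃ (h : Fin s → ℝ) (J : Fin s → Finset (Fin n)) (M : (Fin m → Fin n) → ℝ),
          (∀ k, 0 < h k) ∧ IsSymmetricTensor M ∧ IsZTensor M ∧
            IsQuasiDoubleBTensor M ∧
            ∀ α, B α = M α + ∑ k, h k * epsTensor m n (J k) α :=
  Stmt10Aux.main hm (Stmt10Aux.Jset B).card B le_rfl hsym hB
end

section
/- Let B = (b_{i1...im}) be a symmetric quasi-double B-tensor of even order m and dimension n ≥ 2. Then B is positive definite. -/
open Finset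

section QDB
variable {m n : ℕ}

lemma qdb_mem_rowSet {i : Fin n} {α : Fin m → Fin n} :
    α ∈ rowSet m n i ↔ ∀ t : Fin m, (t : ℕ) = 0 → α t = i := by
  simp [rowSet]

lemma qdb_mem_offRowSet {i : Fin n} {α : Fin m → Fin n} :
    α ∈ offRowSet m n i ↔ (∀ t : Fin m, (t : ℕ) = 0 → α t = i) ∧ α ≠ fun _ => i := by
  simp [offRowSet]

lemma qdb_betaMax_nonneg (B : (Fin m → Fin n) → ℝ) (i : Fin n) : 0 ≤ betaMax B i :=
  (Finset.le_fold_max _).2 (Or.inl le_rfl)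

lemma qdb_le_betaMax (B : (Fin m → Fin n) → ℝ) {i : Fin n} {α : Fin m → Fin n}
    (hα : α ∈ offRowSet m n i) : B α ≤ betaMax B i :=
  (Finset.le_fold_max _).2 (Or.inr ⟨α, hα, le_rfl⟩)

/-- any non-constant tuple `α` containing index `α s` has `B α ≤ β_{α s}`. -/
lemma qdb_le_betaMax_of_apply (hm : 0 < m) {B : (Fin m → Fin n) → ℝ}
    (hsym : IsSymmetricTensor B) {α : Fin m → Fin n}
    (hnc : α ≠ fun _ => α ⟨0, hm⟩) (s : Fin m) : B α ≤ betaMax B (α s) := by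
  set z : Fin m := ⟨0, hm⟩ with hz
  set σ : Equiv.Perm (Fin m) := Equiv.swap z s with hσ
  have h1 : α ∘ σ ∈ offRowSet m n (α s) := by
    rw [qdb_mem_offRowSet]
    constructor
    · intro t ht
      have : t = z := Fin.ext ht
      subst this
      simp [hσ, Equiv.swap_apply_left]
    · intro hconst
      apply hnc
      funext w
      have h2 : α (σ (σ.symm w)) = α s := congrFun hconst (σ.symm w)
      simp only [Equiv.apply_symm_apply] at h2
      have h3 : α (σ (σ.symm z)) = α s := congrFun hconst (σ.symm z)
      simp only [Equiv.apply_symm_apply] at h3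
      rw [h2, ← h3]
  calc B α = B (α ∘ σ) := (hsym σ α).symm
    _ ≤ betaMax B (α s) := qdb_le_betaMax B h1

end QDB
section QDB2
variable {m n : ℕ}

/-- `min_t β_{α_t}`. -/
def minBeta (hm : 0 < m) (B : (Fin m → Fin n) → ℝ) (α : Fin m → Fin n) : ℝ :=
  Finset.univ.inf' (Finset.univ_nonempty_iff.2 (Fin.pos_iff_nonempty.1 hm))
    fun t => betaMax B (α t)

lemma qdb_minBeta_nonneg (hm : 0 < m) (B : (Fin m → Fin n) → ℝ) (α : Fin m → Fin n) :
    0 ≤ minBeta hm B α :=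
  Finset.le_inf' _ _ fun t _ => qdb_betaMax_nonneg B (α t)

lemma qdb_minBeta_le (hm : 0 < m) (B : (Fin m → Fin n) → ℝ) (α : Fin m → Fin n) (t : Fin m) :
    minBeta hm B α ≤ betaMax B (α t) :=
  Finset.inf'_le _ (Finset.mem_univ t)

lemma qdb_le_minBeta (hm : 0 < m) {B : (Fin m → Fin n) → ℝ} (hsym : IsSymmetricTensor B)
    {α : Fin m → Fin n} (hnc : α ≠ fun _ => α ⟨0, hm⟩) :
    B α ≤ minBeta hm B α :=
  Finset.le_inf' _ _ fun t _ => qdb_le_betaMax_of_apply hm hsym hnc t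

lemma qdb_minBeta_comp (hm : 0 < m) (B : (Fin m → Fin n) → ℝ) (σ : Equiv.Perm (Fin m))
    (α : Fin m → Fin n) : minBeta hm B (α ∘ σ) = minBeta hm B α := by
  apply le_antisymm
  · apply Finset.le_inf' _ _ fun t _ => ?_
    have := qdb_minBeta_le hm B (α ∘ σ) (σ.symm t)
    simpa using this
  · apply Finset.le_inf' _ _ fun t _ => ?_
    exact qdb_minBeta_le hm B α (σ t)

/-- The Z-tensor part `M` of the decomposition. -/
def Mten (hm : 0 < m) (B : (Fin m → Fin n) → ℝ) : (Fin m → Fin n) → ℝ :=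
  fun α => B α - minBeta hm B α

lemma qdb_Mten_sym (hm : 0 < m) {B : (Fin m → Fin n) → ℝ} (hsym : IsSymmetricTensor B) :
    IsSymmetricTensor (Mten hm B) := by
  intro σ α
  unfold Mten
  rw [hsym σ α, qdb_minBeta_comp]

lemma qdb_Mten_diag (hm : 0 < m) (B : (Fin m → Fin n) → ℝ) (i : Fin n) :
    diagEntry (Mten hm B) i = diagEntry B i - betaMax B i := by
  unfold diagEntry Mten minBeta
  simp

lemma qdb_offRow_apply_zero {i : Fin n} {α : Fin m → Fin n} (hm : 0 < m)
    (hα : α ∈ offRowSet m n i) : α ⟨0, hm⟩ = i :=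
  (qdb_mem_offRowSet.1 hα).1 ⟨0, hm⟩ rfl

lemma qdb_Mten_abs (hm : 0 < m) {B : (Fin m → Fin n) → ℝ} (hsym : IsSymmetricTensor B)
    {i : Fin n} {α : Fin m → Fin n} (hα : α ∈ offRowSet m n i) :
    |Mten hm B α| = minBeta hm B α - B α := by
  have h0 := qdb_offRow_apply_zero hm hα
  have hnc : α ≠ fun _ => α ⟨0, hm⟩ := by
    rw [h0]; exact (qdb_mem_offRowSet.1 hα).2
  have := qdb_le_minBeta hm hsym hnc
  rw [abs_of_nonpos (by unfold Mten; linarith)]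
  unfold Mten; ring

lemma qdb_Mten_abs_le (hm : 0 < m) {B : (Fin m → Fin n) → ℝ} (hsym : IsSymmetricTensor B)
    {i : Fin n} {α : Fin m → Fin n} (hα : α ∈ offRowSet m n i) :
    |Mten hm B α| ≤ betaMax B i - B α := by
  rw [qdb_Mten_abs hm hsym hα]
  have := qdb_minBeta_le hm B α ⟨0, hm⟩
  rw [qdb_offRow_apply_zero hm hα] at this
  linarith

lemma qdb_Mten_rowAbsSum_le (hm : 0 < m) {B : (Fin m → Fin n) → ℝ}
    (hsym : IsSymmetricTensor B) (i : Fin n) :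
    rowAbsSum (Mten hm B) i ≤ DeltaSum B i :=
  Finset.sum_le_sum fun α hα => qdb_Mten_abs_le hm hsym hα

lemma qdb_rowAbsSum_nonneg (B : (Fin m → Fin n) → ℝ) (i : Fin n) :
    0 ≤ rowAbsSum B i :=
  Finset.sum_nonneg fun α _ => abs_nonneg _

lemma qdb_spike_mem (hm2 : 2 ≤ m) {i j : Fin n} (hij : j ≠ i) :
    spike m n j i ∈ offRowSet m n j := by
  rw [qdb_mem_offRowSet]
  constructor
  · intro t ht; simp [spike, ht]
  · intro hc
    have := congrFun hc ⟨1, hm2⟩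
    simp [spike] at this
    exact hij this.symm

lemma qdb_Mten_spike_abs_le (hm : 0 < m) {B : (Fin m → Fin n) → ℝ}
    (hsym : IsSymmetricTensor B) {i j : Fin n} (hij : j ≠ i) (hm2 : 2 ≤ m) :
    |Mten hm B (spike m n j i)| ≤ betaMax B j - B (spike m n j i) := by
  have h := qdb_Mten_abs_le hm hsym (qdb_spike_mem hm2 hij)
  exact h

lemma qdb_DeltaSum_nonneg (B : (Fin m → Fin n) → ℝ) (i : Fin n) : 0 ≤ DeltaSum B i :=
  Finset.sum_nonneg fun α hα => by linarith [qdb_le_betaMax B hα]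

lemma qdb_Mten_rowAbsSubSum_le (hm : 0 < m) (hm2 : 2 ≤ m) {B : (Fin m → Fin n) → ℝ}
    (hsym : IsSymmetricTensor B) {i j : Fin n} (hij : j ≠ i) :
    rowAbsSubSum (Mten hm B) j i ≤ DeltaSubSum B j i := by
  unfold rowAbsSubSum DeltaSubSum rowAbsSum DeltaSum
  have hmem := qdb_spike_mem (i := i) (j := j) hm2 hij
  rw [← Finset.add_sum_erase _ _ hmem, ← Finset.add_sum_erase _ (fun α => betaMax B j - B α) hmem]
  have h1 : ∀ α ∈ (offRowSet m n j).erase (spike m n j i),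
      |Mten hm B α| ≤ betaMax B j - B α := fun α hα =>
    qdb_Mten_abs_le hm hsym (Finset.mem_of_mem_erase hα)
  have := Finset.sum_le_sum h1
  -- note spike is evaluated in M for the lhs
  have h2 : |Mten hm B (spike m n j i)| = |Mten hm B (spike m n j i)| := rfl
  ring_nf
  linarith

end QDB2
section QDB3
variable {m n : ℕ}

lemma qdb_Mten_diag_pos (hm : 0 < m) {B : (Fin m → Fin n) → ℝ}
    (hB : IsQuasiDoubleBTensor B) (i : Fin n) : 0 < diagEntry (Mten hm B) i := by
  rw [qdb_Mten_diag]
  linarith [hB.1 i]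

lemma qdb_Mten_qdsdd (hm : 0 < m) (hm2 : 2 ≤ m) {B : (Fin m → Fin n) → ℝ}
    (hsym : IsSymmetricTensor B) (hB : IsQuasiDoubleBTensor B) :
    IsQDSDD (Mten hm B) := by
  intro i j hij
  have hQD := hB.2 i j hij
  have hdi := hB.1 i
  have hdj := hB.1 j
  have h1 : rowAbsSum (Mten hm B) i ≤ DeltaSum B i := qdb_Mten_rowAbsSum_le hm hsym i
  have h2 : |Mten hm B (spike m n j i)| ≤ betaMax B j - B (spike m n j i) :=
    qdb_Mten_spike_abs_le hm hsym hij.symm hm2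
  have h3 : rowAbsSubSum (Mten hm B) j i ≤ DeltaSubSum B j i :=
    qdb_Mten_rowAbsSubSum_le hm hm2 hsym hij.symm
  have h4 : 0 ≤ DeltaSum B i := qdb_DeltaSum_nonneg B i
  have h5 : 0 ≤ |Mten hm B (spike m n j i)| := abs_nonneg _
  have hdMi : |diagEntry (Mten hm B) i| = diagEntry B i - betaMax B i := by
    rw [abs_of_pos (qdb_Mten_diag_pos hm hB i), qdb_Mten_diag]
  have hdMj : |diagEntry (Mten hm B) j| = diagEntry B j - betaMax B j := by
    rw [abs_of_pos (qdb_Mten_diag_pos hm hB j), qdb_Mten_diag]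
  rw [hdMi, hdMj]
  calc rowAbsSum (Mten hm B) i * |Mten hm B (spike m n j i)|
      ≤ DeltaSum B i * (betaMax B j - B (spike m n j i)) :=
        mul_le_mul h1 h2 h5 h4
    _ = (betaMax B j - B (spike m n j i)) * DeltaSum B i := by ring
    _ < (diagEntry B i - betaMax B i) *
        (diagEntry B j - betaMax B j - DeltaSubSum B j i) := hQD
    _ ≤ (diagEntry B i - betaMax B i) *
        (diagEntry B j - betaMax B j - rowAbsSubSum (Mten hm B) j i) := by
        apply mul_le_mul_of_nonneg_left (by linarith) (by linarith)

end QDB3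
section QDB4
variable {m n : ℕ}

lemma qdb_inf'_sub_const {s : Finset (Fin m)} (H : s.Nonempty) (f : Fin m → ℝ) (c : ℝ) :
    s.inf' H (fun a => f a - c) = s.inf' H f - c := by
  apply le_antisymm
  · obtain ⟨t, ht, h⟩ := Finset.exists_mem_eq_inf' H f
    have h2 : s.inf' H (fun a => f a - c) ≤ f t - c := Finset.inf'_le _ ht
    rw [h]
    linarith
  · apply Finset.le_inf'
    intro t ht
    have := Finset.inf'_le f ht
    linarith

lemma qdb_layer (hm : 0 < m) (hme : Even m) (x : Fin n → ℝ) :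
    ∀ (k : ℕ) (S : Finset (Fin n)) (β : Fin n → ℝ), S.card ≤ k → (∀ i ∈ S, 0 ≤ β i) →
    0 ≤ ∑ α ∈ Fintype.piFinset (fun _ : Fin m => S),
        (Finset.univ.inf' (Finset.univ_nonempty_iff.2 (Fin.pos_iff_nonempty.1 hm))
          fun t => β (α t)) * ∏ t, x (α t) := by
  have hne : (Finset.univ : Finset (Fin m)).Nonempty :=
    Finset.univ_nonempty_iff.2 (Fin.pos_iff_nonempty.1 hm)
  intro k
  induction k with
  | zero =>
    intro S β hcard hβ
    have hS : S = ∅ := Finset.card_eq_zero.1 (le_antisymm hcard (Nat.zero_le _))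
    subst hS
    rw [Finset.sum_eq_zero]
    intro α hα
    rw [Fintype.mem_piFinset] at hα
    exact absurd (hα ⟨0, hm⟩) (by simp)
  | succ k ih =>
    intro S β hcard hβ
    rcases S.eq_empty_or_nonempty with rfl | hS
    · rw [Finset.sum_eq_zero]
      intro α hα
      rw [Fintype.mem_piFinset] at hα
      exact absurd (hα ⟨0, hm⟩) (by simp)
    set c := S.inf' hS β with hc
    obtain ⟨i0, hi0S, hi0⟩ := Finset.exists_mem_eq_inf' hS β
    have hc0 : 0 ≤ c := by rw [hc, hi0]; exact hβ i0 hi0S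
    have hcle : ∀ i ∈ S, c ≤ β i := fun i hi => Finset.inf'_le β hi
    set S' := S.filter (fun i => c < β i) with hS'
    have hsub : S' ⊆ S := Finset.filter_subset _ _
    have hi0n : i0 ∉ S' := by
      rw [hS', Finset.mem_filter]
      rintro ⟨-, h⟩
      rw [← hi0] at h
      exact lt_irrefl _ h
    have hcard' : S'.card ≤ k := by
      have : S'.card < S.card := Finset.card_lt_card ⟨hsub, fun h => hi0n (h hi0S)⟩
      omega
    -- rewrite each term
    have hterm : ∀ α ∈ Fintype.piFinset (fun _ : Fin m => S),
        (Finset.univ.inf' hne fun t => β (α t)) * ∏ t, x (α t) =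
        c * ∏ t, x (α t) +
          (Finset.univ.inf' hne fun t => β (α t) - c) * ∏ t, x (α t) := by
      intro α hα
      rw [qdb_inf'_sub_const hne (fun t => β (α t)) c]
      have h1 : c ≤ Finset.univ.inf' hne fun t => β (α t) := by
        apply Finset.le_inf'
        intro t _
        exact hcle _ ((Fintype.mem_piFinset).1 hα t)
      ring
    rw [Finset.sum_congr rfl hterm, Finset.sum_add_distrib, ← Finset.mul_sum]
    have hpow : ∑ α ∈ Fintype.piFinset (fun _ : Fin m => S), ∏ t, x (α t) =
        (∑ i ∈ S, x i) ^ m := by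
      rw [← Finset.prod_univ_sum]
      simp
    have h1 : 0 ≤ c * ∑ α ∈ Fintype.piFinset (fun _ : Fin m => S), ∏ t, x (α t) := by
      rw [hpow]
      exact mul_nonneg hc0 (hme.pow_nonneg _)
    have h2 : 0 ≤ ∑ α ∈ Fintype.piFinset (fun _ : Fin m => S),
        (Finset.univ.inf' hne fun t => β (α t) - c) * ∏ t, x (α t) := by
      rw [← Finset.sum_subset (Fintype.piFinset_subset _ _ fun _ => hsub)]
      · exact ih S' (fun i => β i - c) hcard' (fun i hi => by
          have := (Finset.mem_filter.1 hi).2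
          show (0:ℝ) ≤ β i - c
          linarith)
      · intro α hα hα'
        rw [Fintype.mem_piFinset] at hα
        have : ∃ t, β (α t) = c := by
          by_contra hno
          push_neg at hno
          apply hα'
          rw [Fintype.mem_piFinset]
          intro t
          rw [hS', Finset.mem_filter]
          exact ⟨hα t, lt_of_le_of_ne (hcle _ (hα t)) (Ne.symm (hno t))⟩
        obtain ⟨t0, ht0⟩ := this
        have hinf : (Finset.univ.inf' hne fun t => β (α t) - c) = 0 := by
          apply le_antisymm
          · exact le_trans (Finset.inf'_le _ (Finset.mem_univ t0)) (by rw [ht0]; ring_nf; exact le_rfl)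
          · apply Finset.le_inf'
            intro t _
            have := hcle _ (hα t)
            linarith
        rw [hinf, zero_mul]
    linarith

end QDB4
section QDB5
variable {m n : ℕ}

lemma qdb_tensor_ge (hm : 0 < m) (hme : Even m) (B : (Fin m → Fin n) → ℝ) (x : Fin n → ℝ) :
    tensorApply (Mten hm B) x ≤ tensorApply B x := by
  have h := qdb_layer hm hme x (Finset.univ.card) Finset.univ (betaMax B) le_rfl
    (fun i _ => qdb_betaMax_nonneg B i)
  rw [Fintype.piFinset_univ] at h
  have key : tensorApply B x = tensorApply (Mten hm B) x +
      ∑ α : Fin m → Fin n, minBeta hm B α * ∏ t, x (α t) := by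
    unfold tensorApply Mten
    rw [← Finset.sum_add_distrib]
    exact Finset.sum_congr rfl fun α _ => by ring
  rw [key]
  have h' : (0:ℝ) ≤ ∑ α : Fin m → Fin n, minBeta hm B α * ∏ t, x (α t) := h
  linarith

lemma qdb_tensor_smul (B : (Fin m → Fin n) → ℝ) (c : ℝ) (x : Fin n → ℝ) :
    tensorApply B (c • x) = c ^ m * tensorApply B x := by
  unfold tensorApply
  rw [Finset.mul_sum]
  apply Finset.sum_congr rfl
  intro α _
  have : ∏ t, (c • x) (α t) = c ^ m * ∏ t, x (α t) := by
    simp only [Pi.smul_apply, smul_eq_mul]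
    rw [Finset.prod_mul_distrib, Finset.prod_const]
    simp
  rw [this]; ring

lemma qdb_tensor_cont (B : (Fin m → Fin n) → ℝ) : Continuous (tensorApply B) := by
  unfold tensorApply
  apply continuous_finset_sum
  intro α _
  exact continuous_const.mul (continuous_finset_prod _ fun t _ => continuous_apply _)

lemma qdb_tensor_zero (hm : 0 < m) (B : (Fin m → Fin n) → ℝ) : tensorApply B 0 = 0 := by
  unfold tensorApply
  apply Finset.sum_eq_zero
  intro α _
  have : ∏ t, (0 : Fin n → ℝ) (α t) = 0 := by
    rw [Finset.prod_eq_zero (Finset.mem_univ ⟨0, hm⟩)]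
    rfl
  rw [this, mul_zero]

lemma qdb_filter_ne (hm : 0 < m) :
    (Finset.univ.filter fun t : Fin m => (t : ℕ) ≠ 0) = Finset.univ.erase ⟨0, hm⟩ := by
  ext t
  simp only [Finset.mem_filter, Finset.mem_erase, Finset.mem_univ, true_and, and_true]
  constructor
  · intro h h2; exact h (by rw [h2])
  · intro h h2; exact h (Fin.ext h2)

lemma qdb_rowSet_eq (hm : 0 < m) (i : Fin n) :
    rowSet m n i = Finset.univ.filter (fun α : Fin m → Fin n => α ⟨0, hm⟩ = i) := by
  ext α
  rw [qdb_mem_rowSet, Finset.mem_filter]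
  constructor
  · intro h; exact ⟨Finset.mem_univ _, h ⟨0, hm⟩ rfl⟩
  · rintro ⟨-, h⟩ t ht
    have : t = (⟨0, hm⟩ : Fin m) := Fin.ext ht
    rw [this, h]

lemma qdb_fiber (hm : 0 < m) (B : (Fin m → Fin n) → ℝ) (y v : Fin n → ℝ) :
    ∑ α : Fin m → Fin n, B α * ((∏ t ∈ Finset.univ.erase ⟨0, hm⟩, y (α t)) * v (α ⟨0, hm⟩)) =
    ∑ i, v i * rowApply B y i := by
  rw [← Finset.sum_fiberwise Finset.univ (fun α : Fin m → Fin n => α ⟨0, hm⟩)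
    (fun α => B α * ((∏ t ∈ Finset.univ.erase ⟨0, hm⟩, y (α t)) * v (α ⟨0, hm⟩)))]
  apply Finset.sum_congr rfl
  intro i _
  unfold rowApply
  rw [qdb_rowSet_eq hm i, Finset.mul_sum]
  apply Finset.sum_congr rfl
  intro α hα
  have hαi : α ⟨0, hm⟩ = i := (Finset.mem_filter.1 hα).2
  rw [qdb_filter_ne hm, hαi]
  ring

lemma qdb_sum_row (hm : 0 < m) (B : (Fin m → Fin n) → ℝ) (x : Fin n → ℝ) :
    ∑ i, x i * rowApply B x i = tensorApply B x := by
  rw [← qdb_fiber hm B x x]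
  unfold tensorApply
  apply Finset.sum_congr rfl
  intro α _
  rw [← Finset.mul_prod_erase Finset.univ (fun t => x (α t)) (Finset.mem_univ ⟨0, hm⟩)]
  ring

lemma qdb_offRowSet_eq (i : Fin n) :
    offRowSet m n i = (rowSet m n i).erase (fun _ => i) := by
  ext α
  rw [qdb_mem_offRowSet, Finset.mem_erase, qdb_mem_rowSet]
  tauto

lemma qdb_const_mem_rowSet (i : Fin n) : (fun _ => i) ∈ rowSet m n i :=
  qdb_mem_rowSet.2 fun _ _ => rfl

lemma qdb_card_erase (hm : 0 < m) :
    (Finset.univ.erase (⟨0, hm⟩ : Fin m)).card = m - 1 := by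
  rw [Finset.card_erase_of_mem (Finset.mem_univ _)]
  simp

lemma qdb_rowApply_split (hm : 0 < m) (B : (Fin m → Fin n) → ℝ) (x : Fin n → ℝ) (i : Fin n) :
    rowApply B x i = diagEntry B i * x i ^ (m - 1) +
      ∑ α ∈ offRowSet m n i, B α *
        ∏ t ∈ Finset.univ.filter (fun t : Fin m => (t : ℕ) ≠ 0), x (α t) := by
  unfold rowApply
  rw [← Finset.add_sum_erase _ _ (qdb_const_mem_rowSet i), ← qdb_offRowSet_eq]
  congr 1
  have : ∏ t ∈ Finset.univ.filter (fun t : Fin m => (t : ℕ) ≠ 0), x i = x i ^ (m - 1) := by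
    rw [Finset.prod_const, qdb_filter_ne hm, qdb_card_erase hm]
  rw [this]
  rfl

end QDB5
section QDB6
set_option maxHeartbeats 1600000
variable {m n : ℕ}

lemma qdb_prod_erase_perm (σ : Equiv.Perm (Fin m)) (w : Fin m) (f : Fin m → ℝ) :
    ∏ t ∈ Finset.univ.erase w, f (σ t) = ∏ s ∈ Finset.univ.erase (σ w), f s := by
  apply Finset.prod_bij' (fun a _ => σ a) (fun b _ => σ.symm b)
  · intro a ha
    simp only [Finset.mem_erase, Finset.mem_univ, and_true] at ha ⊢
    exact fun h => ha (σ.injective h)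
  · intro b hb
    simp only [Finset.mem_erase, Finset.mem_univ, and_true] at hb ⊢
    intro h
    apply hb
    rw [← h, Equiv.apply_symm_apply]
  · intro a _; simp
  · intro b _; simp
  · intro a _; rfl

lemma qdb_hasFDerivAt_tensor (hm : 0 < m) {B : (Fin m → Fin n) → ℝ}
    (hsym : IsSymmetricTensor B) (y : Fin n → ℝ) :
    HasFDerivAt (tensorApply B)
      (∑ i, ((m : ℝ) * rowApply B y i) •
        ContinuousLinearMap.proj (R := ℝ) (φ := fun _ : Fin n => ℝ) i) y := by
  set z : Fin m := ⟨0, hm⟩ with hz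
  have h1 : ∀ α : Fin m → Fin n, HasFDerivAt (fun x : Fin n → ℝ => ∏ t, x (α t))
      (∑ t, (∏ t' ∈ Finset.univ.erase t, y (α t')) •
        ContinuousLinearMap.proj (R := ℝ) (φ := fun _ : Fin n => ℝ) (α t)) y := by
    intro α
    exact HasFDerivAt.finset_prod (u := Finset.univ)
      (g := fun (t : Fin m) (x : Fin n → ℝ) => x (α t))
      (g' := fun t => ContinuousLinearMap.proj (R := ℝ) (φ := fun _ : Fin n => ℝ) (α t))
      (fun t _ => (ContinuousLinearMap.proj (R := ℝ)
        (φ := fun _ : Fin n => ℝ) (α t)).hasFDerivAt)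
  have hD : HasFDerivAt (tensorApply B)
      (∑ α : Fin m → Fin n, B α • (∑ t, (∏ t' ∈ Finset.univ.erase t, y (α t')) •
        ContinuousLinearMap.proj (R := ℝ) (φ := fun _ : Fin n => ℝ) (α t))) y :=
    HasFDerivAt.fun_sum (fun α _ => (h1 α).const_mul (B α))
  have heq : (∑ α : Fin m → Fin n, B α • (∑ t, (∏ t' ∈ Finset.univ.erase t, y (α t')) •
        ContinuousLinearMap.proj (R := ℝ) (φ := fun _ : Fin n => ℝ) (α t))) =
      ∑ i, ((m : ℝ) * rowApply B y i) •
        ContinuousLinearMap.proj (R := ℝ) (φ := fun _ : Fin n => ℝ) i := by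
    apply ContinuousLinearMap.ext
    intro v
    simp only [ContinuousLinearMap.sum_apply, ContinuousLinearMap.smul_apply,
      ContinuousLinearMap.proj_apply, smul_eq_mul]
    have key : ∀ t : Fin m, ∑ α : Fin m → Fin n,
        B α * ((∏ t' ∈ Finset.univ.erase t, y (α t')) * v (α t)) =
        ∑ α : Fin m → Fin n,
        B α * ((∏ t' ∈ Finset.univ.erase z, y (α t')) * v (α z)) := by
      intro t
      set σ : Equiv.Perm (Fin m) := Equiv.swap z t with hσ
      have hbij : Function.Bijective (fun α : Fin m → Fin n => α ∘ σ) := by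
        have hinv : Function.Involutive (fun α : Fin m → Fin n => α ∘ σ) := by
          intro α
          funext w
          simp [hσ, Function.comp, Equiv.swap_apply_self]
        exact hinv.bijective
      refine Fintype.sum_bijective _ hbij _ _ ?_
      intro α
      show B α * ((∏ t' ∈ Finset.univ.erase t, y (α t')) * v (α t)) =
        B (α ∘ σ) * ((∏ t' ∈ Finset.univ.erase z, y ((α ∘ σ) t')) * v ((α ∘ σ) z))
      rw [hsym σ α]
      have hp : ∏ t' ∈ Finset.univ.erase z, y ((α ∘ σ) t') =
          ∏ s ∈ Finset.univ.erase (σ z), y (α s) :=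
        qdb_prod_erase_perm σ z (fun s => y (α s))
      have hσz : σ z = t := Equiv.swap_apply_left z t
      rw [hp, hσz]
      have : (α ∘ σ) z = α t := by simp [Function.comp, hσz]
      rw [this]
    calc ∑ α : Fin m → Fin n, B α * ∑ t, (∏ t' ∈ Finset.univ.erase t, y (α t')) * v (α t)
        = ∑ t, ∑ α : Fin m → Fin n,
            B α * ((∏ t' ∈ Finset.univ.erase t, y (α t')) * v (α t)) := by
          rw [Finset.sum_comm]
          exact Finset.sum_congr rfl fun α _ => by rw [Finset.mul_sum]
      _ = ∑ t : Fin m, ∑ α : Fin m → Fin n,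
            B α * ((∏ t' ∈ Finset.univ.erase z, y (α t')) * v (α z)) :=
          Finset.sum_congr rfl fun t _ => key t
      _ = (m : ℝ) * ∑ α : Fin m → Fin n,
            B α * ((∏ t' ∈ Finset.univ.erase z, y (α t')) * v (α z)) := by
          rw [Finset.sum_const, Finset.card_univ, Fintype.card_fin, nsmul_eq_mul]
      _ = (m : ℝ) * ∑ i, v i * rowApply B y i := by
          rw [qdb_fiber hm B y v]
      _ = ∑ i, (m : ℝ) * rowApply B y i * v i := by
          rw [Finset.mul_sum]
          exact Finset.sum_congr rfl fun i _ => by ring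
  rw [heq] at hD
  exact hD

lemma qdb_hasFDerivAt_gpow (m : ℕ) (y : Fin n → ℝ) :
    HasFDerivAt (fun x : Fin n → ℝ => ∑ i, x i ^ m)
      (∑ i, ((m : ℝ) * y i ^ (m - 1)) •
        ContinuousLinearMap.proj (R := ℝ) (φ := fun _ : Fin n => ℝ) i) y :=
  HasFDerivAt.fun_sum fun i _ =>
    (hasDerivAt_pow m (y i)).comp_hasFDerivAt y
      (ContinuousLinearMap.proj (R := ℝ) (φ := fun _ : Fin n => ℝ) i).hasFDerivAt

end QDB6
section QDB7
variable {m n : ℕ}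

lemma qdb_eigen_pos (hm : 0 < m) (hm2 : 2 ≤ m) (hn : 2 ≤ n)
    {M : (Fin m → Fin n) → ℝ} (hdiag : ∀ i, 0 < diagEntry M i) (hq : IsQDSDD M)
    {y : Fin n → ℝ} (hy : y ≠ 0) {lam : ℝ}
    (heig : ∀ i, rowApply M y i = lam * y i ^ (m - 1)) : 0 < lam := by
  by_contra hlam
  push_neg at hlam
  obtain ⟨u, -, hu⟩ := Finset.exists_max_image Finset.univ (fun i => |y i|)
    ⟨⟨0, by omega⟩, Finset.mem_univ _⟩
  set a := |y u| with hadef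
  have ha : ∀ w, |y w| ≤ a := fun w => hu w (Finset.mem_univ w)
  have ha0 : 0 < a := by
    rcases Function.ne_iff.1 hy with ⟨k, hk⟩
    have hk' : y k ≠ 0 := hk
    calc (0:ℝ) < |y k| := abs_pos.2 hk'
      _ ≤ a := ha k
  have herase : (Finset.univ.erase u).Nonempty := by
    rw [← Finset.card_pos, Finset.card_erase_of_mem (Finset.mem_univ u),
      Finset.card_univ, Fintype.card_fin]
    omega
  obtain ⟨v, hvmem, hv⟩ := Finset.exists_max_image _ (fun i => |y i|) herase
  have hvu : v ≠ u := (Finset.mem_erase.1 hvmem).1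
  set b := |y v| with hbdef
  have hb : ∀ w, w ≠ u → |y w| ≤ b := fun w hw =>
    hv w (Finset.mem_erase.2 ⟨hw, Finset.mem_univ _⟩)
  have hba : b ≤ a := ha v
  have hb0 : 0 ≤ b := abs_nonneg _
  set F := Finset.univ.filter (fun t : Fin m => (t : ℕ) ≠ 0) with hF
  have hcardF : F.card = m - 1 := by rw [hF, qdb_filter_ne hm, qdb_card_erase hm]
  have hprod_le : ∀ α : Fin m → Fin n, ∏ t ∈ F, |y (α t)| ≤ a ^ (m - 1) := by
    intro α
    calc ∏ t ∈ F, |y (α t)| ≤ ∏ _t ∈ F, a :=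
          Finset.prod_le_prod (fun _ _ => abs_nonneg _) (fun t _ => ha _)
      _ = a ^ (m - 1) := by rw [Finset.prod_const, hcardF]
  have hprod_le2 : ∀ α ∈ offRowSet m n u, ∏ t ∈ F, |y (α t)| ≤ a ^ (m - 2) * b := by
    intro α hα
    have hnc := (qdb_mem_offRowSet.1 hα).2
    have hz0 : α ⟨0, hm⟩ = u := qdb_offRow_apply_zero hm hα
    obtain ⟨t0, ht0⟩ : ∃ t0, α t0 ≠ u := by
      by_contra hno; push_neg at hno
      exact hnc (funext hno)
    have ht0F : t0 ∈ F := by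
      rw [hF, Finset.mem_filter]
      refine ⟨Finset.mem_univ _, fun h => ?_⟩
      have ht0z : t0 = (⟨0, hm⟩ : Fin m) := Fin.ext h
      rw [ht0z, hz0] at ht0
      exact ht0 rfl
    rw [← Finset.mul_prod_erase F _ ht0F]
    have h1 : |y (α t0)| ≤ b := hb _ ht0
    have h2 : ∏ t ∈ F.erase t0, |y (α t)| ≤ a ^ (m - 2) := by
      calc ∏ t ∈ F.erase t0, |y (α t)| ≤ ∏ _t ∈ F.erase t0, a :=
            Finset.prod_le_prod (fun _ _ => abs_nonneg _) (fun t _ => ha _)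
        _ = a ^ (m - 2) := by
            rw [Finset.prod_const, Finset.card_erase_of_mem ht0F, hcardF]
            congr 1
    calc |y (α t0)| * ∏ t ∈ F.erase t0, |y (α t)| ≤ b * a ^ (m - 2) :=
          mul_le_mul h1 h2 (Finset.prod_nonneg fun _ _ => abs_nonneg _) hb0
      _ = a ^ (m - 2) * b := by ring
  have hrow : ∀ i : Fin n, (diagEntry M i - lam) * |y i| ^ (m - 1) ≤
      ∑ α ∈ offRowSet m n i, |M α| * ∏ t ∈ F, |y (α t)| := by
    intro i
    have hs := qdb_rowApply_split hm M y i
    rw [heig i] at hs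
    have hE : (diagEntry M i - lam) * y i ^ (m - 1) =
        -(∑ α ∈ offRowSet m n i, M α * ∏ t ∈ F, y (α t)) := by
      rw [hF]
      linarith [hs]
    calc (diagEntry M i - lam) * |y i| ^ (m - 1)
        = |(diagEntry M i - lam) * y i ^ (m - 1)| := by
          rw [abs_mul, abs_of_nonneg (by linarith [hdiag i] : (0:ℝ) ≤ diagEntry M i - lam),
            abs_pow]
      _ = |∑ α ∈ offRowSet m n i, M α * ∏ t ∈ F, y (α t)| := by rw [hE, abs_neg]
      _ ≤ ∑ α ∈ offRowSet m n i, |M α * ∏ t ∈ F, y (α t)| := Finset.abs_sum_le_sum_abs _ _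
      _ = ∑ α ∈ offRowSet m n i, |M α| * ∏ t ∈ F, |y (α t)| := by
          refine Finset.sum_congr rfl fun α _ => ?_
          rw [abs_mul, Finset.abs_prod]
  set sp := spike m n u v with hspdef
  have hspmem : sp ∈ offRowSet m n u := qdb_spike_mem hm2 hvu.symm
  have hspprod : ∏ t ∈ F, |y (sp t)| = b ^ (m - 1) := by
    have hc : ∀ t ∈ F, |y (sp t)| = b := by
      intro t ht
      have ht' : (t : ℕ) ≠ 0 := (Finset.mem_filter.1 ht).2
      rw [hspdef]
      simp [spike, ht', hbdef]
    rw [Finset.prod_congr rfl hc, Finset.prod_const, hcardF]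
  set s := |M sp| with hsdef
  set q := rowAbsSubSum M u v with hqdef
  have hsum_erase : rowAbsSum M u = s + ∑ α ∈ (offRowSet m n u).erase sp, |M α| := by
    rw [hsdef]
    exact (Finset.add_sum_erase (offRowSet m n u) (fun α => |M α|) hspmem).symm
  have hqe : q = ∑ α ∈ (offRowSet m n u).erase sp, |M α| := by
    rw [hqdef]
    unfold rowAbsSubSum
    rw [← hspdef, ← hsdef]
    linarith [hsum_erase]
  have hq0 : 0 ≤ q := by
    rw [hqe]
    exact Finset.sum_nonneg fun _ _ => abs_nonneg _
  have hs0 : 0 ≤ s := abs_nonneg _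
  have hrowu : (diagEntry M u - lam) * a ^ (m - 1) ≤
      s * b ^ (m - 1) + q * (a ^ (m - 2) * b) := by
    refine le_trans (hrow u) ?_
    rw [← Finset.add_sum_erase _ _ hspmem, hspprod]
    have h2 : ∑ α ∈ (offRowSet m n u).erase sp, |M α| * ∏ t ∈ F, |y (α t)| ≤
        q * (a ^ (m - 2) * b) := by
      rw [hqe, Finset.sum_mul]
      refine Finset.sum_le_sum fun α hα => ?_
      exact mul_le_mul_of_nonneg_left (hprod_le2 α (Finset.mem_of_mem_erase hα)) (abs_nonneg _)
    linarith [h2]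
  have hrowv : (diagEntry M v - lam) * b ^ (m - 1) ≤ rowAbsSum M v * a ^ (m - 1) := by
    refine le_trans (hrow v) ?_
    unfold rowAbsSum
    rw [Finset.sum_mul]
    exact Finset.sum_le_sum fun α _ => mul_le_mul_of_nonneg_left (hprod_le α) (abs_nonneg _)
  have hQ := hq v u hvu
  rw [abs_of_pos (hdiag v), abs_of_pos (hdiag u)] at hQ
  rw [← hspdef, ← hsdef, ← hqdef] at hQ
  set du := diagEntry M u with hdu
  set dv := diagEntry M v with hdv
  have hdu0 : 0 < du := hdiag u
  have hdv0 : 0 < dv := hdiag v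
  have hA : (0:ℝ) < a ^ (m - 1) := pow_pos ha0 _
  have hBb : (0:ℝ) ≤ b ^ (m - 1) := pow_nonneg hb0 _
  have hCa : a ^ (m - 2) * a = a ^ (m - 1) := by
    rw [← pow_succ]
    congr 1
    omega
  have c1 : du * a ^ (m - 1) ≤ s * b ^ (m - 1) + q * (a ^ (m - 2) * b) := by
    nlinarith [hrowu, hA]
  have c2 : dv * b ^ (m - 1) ≤ rowAbsSum M v * a ^ (m - 1) := by
    nlinarith [hrowv, hBb]
  have key1 : dv * (du * a ^ (m - 1)) ≤
      dv * (s * b ^ (m - 1) + q * (a ^ (m - 2) * b)) :=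
    mul_le_mul_of_nonneg_left c1 hdv0.le
  have key2 : s * (dv * b ^ (m - 1)) ≤ s * (rowAbsSum M v * a ^ (m - 1)) :=
    mul_le_mul_of_nonneg_left c2 hs0
  have key3 : dv * (q * (a ^ (m - 2) * b)) ≤ dv * (q * a ^ (m - 1)) := by
    have h1 : a ^ (m - 2) * b ≤ a ^ (m - 2) * a :=
      mul_le_mul_of_nonneg_left hba (pow_nonneg ha0.le _)
    rw [hCa] at h1
    exact mul_le_mul_of_nonneg_left (mul_le_mul_of_nonneg_left h1 hq0) hdv0.le
  have key4 : rowAbsSum M v * s * a ^ (m - 1) < dv * (du - q) * a ^ (m - 1) :=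
    mul_lt_mul_of_pos_right hQ hA
  nlinarith [key1, key2, key3, key4]

end QDB7
section QDB8
set_option maxHeartbeats 1600000
variable {m n : ℕ}

lemma qdb_sum_pow_pos (hm : 0 < m) (hme : Even m) {x : Fin n → ℝ} (hx : x ≠ 0) :
    0 < ∑ i, x i ^ m := by
  obtain ⟨k, hk⟩ := Function.ne_iff.1 hx
  exact Finset.sum_pos' (fun j _ => hme.pow_nonneg _)
    ⟨k, Finset.mem_univ k, hme.pow_pos hk⟩

lemma qdb_posdef (hm : 0 < m) (hme : Even m) (hm2 : 2 ≤ m) (hn : 2 ≤ n)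
    {M : (Fin m → Fin n) → ℝ} (hMs : IsSymmetricTensor M)
    (hdiag : ∀ i, 0 < diagEntry M i) (hq : IsQDSDD M) : IsPosDefTensor M := by
  have hmne : (m : ℝ) ≠ 0 := Nat.cast_ne_zero.2 (by omega)
  set K : Set (Fin n → ℝ) := {x | ∑ i, x i ^ m = 1} with hK
  have hgcont : Continuous fun x : Fin n → ℝ => ∑ i, x i ^ m := by
    apply continuous_finset_sum
    exact fun i _ => (continuous_apply i).pow m
  have hclosed : IsClosed K := isClosed_eq hgcont continuous_const
  have hsub : K ⊆ Metric.closedBall 0 1 := by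
    intro x hx
    rw [Metric.mem_closedBall, dist_pi_le_iff (by norm_num : (0:ℝ) ≤ 1)]
    intro i
    have hxK : ∑ j, x j ^ m = 1 := hx
    have h1 : x i ^ m ≤ 1 := by
      calc x i ^ m ≤ ∑ j, x j ^ m :=
            Finset.single_le_sum (fun j _ => hme.pow_nonneg (x j)) (Finset.mem_univ i)
        _ = 1 := hxK
    have h2 : |x i| ≤ 1 := by
      by_contra hgt
      push_neg at hgt
      have h3 : (1:ℝ) < |x i| ^ m := one_lt_pow₀ hgt (by omega)
      rw [← abs_pow, abs_of_nonneg (hme.pow_nonneg (x i))] at h3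
      linarith
    calc dist (x i) ((0 : Fin n → ℝ) i) = |x i| := by
          simp [Real.dist_eq]
      _ ≤ 1 := h2
  have hcomp : IsCompact K := (isCompact_closedBall 0 1).of_isClosed_subset hclosed hsub
  have hKne : K.Nonempty := by
    refine ⟨Pi.single (⟨0, by omega⟩ : Fin n) (1:ℝ), ?_⟩
    rw [hK]
    show ∑ i, (Pi.single (⟨0, by omega⟩ : Fin n) (1:ℝ) : Fin n → ℝ) i ^ m = 1
    have hterm : ∀ i : Fin n, (Pi.single (⟨0, by omega⟩ : Fin n) (1:ℝ) : Fin n → ℝ) i ^ m =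
        if i = (⟨0, by omega⟩ : Fin n) then 1 else 0 := by
      intro i
      rw [Pi.single_apply]
      by_cases h : i = (⟨0, by omega⟩ : Fin n) <;>
        simp [h, zero_pow (by omega : m ≠ 0)]
    rw [Finset.sum_congr rfl fun i _ => hterm i, Finset.sum_ite_eq' Finset.univ]
    simp
  obtain ⟨y, hyK, hymin⟩ := hcomp.exists_isMinOn hKne (qdb_tensor_cont M).continuousOn
  set lam := tensorApply M y with hlamdef
  have hy1 : ∑ i, y i ^ m = 1 := hyK
  have hyne : y ≠ 0 := by
    intro h0
    rw [h0] at hy1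
    simp [zero_pow (by omega : m ≠ 0)] at hy1
  have hglob : ∀ x : Fin n → ℝ, lam * ∑ i, x i ^ m ≤ tensorApply M x := by
    intro x
    rcases eq_or_ne x 0 with rfl | hx
    · rw [qdb_tensor_zero hm M]
      simp [zero_pow (by omega : m ≠ 0)]
    · have hS : 0 < ∑ i, x i ^ m := qdb_sum_pow_pos hm hme hx
      set S := ∑ i, x i ^ m with hSdef
      set c := S ^ ((m:ℝ)⁻¹) with hc
      have hc0 : 0 < c := Real.rpow_pos_of_pos hS _
      have hcm : c ^ m = S := by
        rw [hc, ← Real.rpow_natCast (S ^ ((m:ℝ)⁻¹)) m, ← Real.rpow_mul hS.le,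
          inv_mul_cancel₀ hmne, Real.rpow_one]
      have hzK : c⁻¹ • x ∈ K := by
        show ∑ i, (c⁻¹ • x) i ^ m = 1
        have hterm : ∀ i : Fin n, (c⁻¹ • x) i ^ m = c⁻¹ ^ m * x i ^ m := fun i => by
          simp [Pi.smul_apply, smul_eq_mul, mul_pow]
        rw [Finset.sum_congr rfl fun i _ => hterm i, ← Finset.mul_sum, inv_pow, hcm,
          ← hSdef, inv_mul_cancel₀ hS.ne']
      have hmin2 : lam ≤ tensorApply M (c⁻¹ • x) := isMinOn_iff.1 hymin _ hzK
      have hx_eq : tensorApply M x = c ^ m * tensorApply M (c⁻¹ • x) := by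
        conv_lhs => rw [← smul_inv_smul₀ hc0.ne' x]
        rw [qdb_tensor_smul M c (c⁻¹ • x)]
      rw [hx_eq, hcm]
      nlinarith [hmin2, hS]
  set D := ∑ i, ((m : ℝ) * rowApply M y i) •
    ContinuousLinearMap.proj (R := ℝ) (φ := fun _ : Fin n => ℝ) i with hDdef
  set G := ∑ i, ((m : ℝ) * y i ^ (m - 1)) •
    ContinuousLinearMap.proj (R := ℝ) (φ := fun _ : Fin n => ℝ) i with hGdef
  have hD := qdb_hasFDerivAt_tensor hm hMs y
  have hG := qdb_hasFDerivAt_gpow (n := n) m y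
  have hh : HasFDerivAt (fun x : Fin n → ℝ => tensorApply M x - lam * ∑ i, x i ^ m)
      (D - lam • G) y := hD.sub (hG.const_mul lam)
  have hmin : IsLocalMin (fun x : Fin n → ℝ => tensorApply M x - lam * ∑ i, x i ^ m) y := by
    have hall : ∀ x : Fin n → ℝ,
        tensorApply M y - lam * ∑ i, y i ^ m ≤ tensorApply M x - lam * ∑ i, x i ^ m := by
      intro x
      rw [hy1, ← hlamdef]
      have := hglob x
      linarith
    exact Filter.Eventually.of_forall hall
  have hzero : D - lam • G = 0 := hmin.hasFDerivAt_eq_zero hh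
  have heig : ∀ i, rowApply M y i = lam * y i ^ (m - 1) := by
    intro i
    have happ : D (Pi.single i 1) - lam * G (Pi.single i 1) = 0 := by
      have h1 := congrFun (congrArg DFunLike.coe hzero) (Pi.single i 1)
      simpa [ContinuousLinearMap.sub_apply, ContinuousLinearMap.smul_apply,
        smul_eq_mul] using h1
    have hDe : D (Pi.single i 1) = (m : ℝ) * rowApply M y i := by
      rw [hDdef]
      simp [ContinuousLinearMap.sum_apply, ContinuousLinearMap.smul_apply,
        ContinuousLinearMap.proj_apply, Pi.single_apply, smul_eq_mul, mul_ite,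
        Finset.sum_ite_eq', mul_one, mul_zero]
    have hGe : G (Pi.single i 1) = (m : ℝ) * y i ^ (m - 1) := by
      rw [hGdef]
      simp [ContinuousLinearMap.sum_apply, ContinuousLinearMap.smul_apply,
        ContinuousLinearMap.proj_apply, Pi.single_apply, smul_eq_mul, mul_ite,
        Finset.sum_ite_eq', mul_one, mul_zero]
    rw [hDe, hGe] at happ
    have h2 : (m : ℝ) * rowApply M y i = (m : ℝ) * (lam * y i ^ (m - 1)) := by linear_combination happ
    exact mul_left_cancel₀ hmne h2
  have hlam0 : 0 < lam := qdb_eigen_pos hm hm2 hn hdiag hq hyne heig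
  intro x hx
  have hS : 0 < ∑ i, x i ^ m := qdb_sum_pow_pos hm hme hx
  calc (0:ℝ) < lam * ∑ i, x i ^ m := mul_pos hlam0 hS
    _ ≤ tensorApply M x := hglob x

end QDB8
/-- an even order symmetric quasi-double B-tensor is positive definite. -/
theorem stmt11 (m n : ℕ) (hm : 0 < m) (hme : Even m) (hn : 2 ≤ n)
    (B : (Fin m → Fin n) → ℝ) (hsym : IsSymmetricTensor B)
    (hB : IsQuasiDoubleBTensor B) : IsPosDefTensor B := by
  have hm2 : 2 ≤ m := by
    obtain ⟨k, hk⟩ := hme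
    omega
  have hMpos : IsPosDefTensor (Mten hm B) :=
    qdb_posdef hm hme hm2 hn (qdb_Mten_sym hm hsym) (qdb_Mten_diag_pos hm hB)
      (qdb_Mten_qdsdd hm hm2 hsym hB)
  intro x hx
  exact lt_of_lt_of_le (hMpos x hx) (qdb_tensor_ge hm hme B x)
end
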